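/- arXiv:1606.04696 — 8 statements merged into one kernel-verified Lean document; each statement's English description precedes it below -/
import Mathlib

section
/- If E is a real n×n matrix (not necessarily symmetric) with operator norm ‖E‖₂ ≤ 1/4, then |log det(I + E) − tr(E)| ≤ ‖E‖_F², where ‖·‖_F is the Frobenius norm. -/
/-- Euclidean norm of a vector in `ℝⁿ`. -/
noncomputable def euclNorm {n : ℕ} (v : Fin n → ℝ) : ℝ := Real.sqrt (∑ i, v i ^ 2)

/-- Frobenius norm of a square real matrix. -/
noncomputable def frobNorm {n : ℕ} (E : Matrix (Fin n) (Fin n) ℝ) : ℝ :=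
  Real.sqrt (∑ i, ∑ j, E i j ^ 2)

section aux

open Matrix Polynomial

lemma euclNorm_eq' {n : ℕ} (v : Fin n → ℝ) :
    euclNorm v = ‖(WithLp.equiv 2 (Fin n → ℝ)).symm v‖ := by
  rw [EuclideanSpace.norm_eq]
  simp [euclNorm, sq_abs]

lemma euclNorm_nonneg {n : ℕ} (v : Fin n → ℝ) : 0 ≤ euclNorm v :=
  Real.sqrt_nonneg _

lemma euclNorm_smul {n : ℕ} (c : ℝ) (v : Fin n → ℝ) :
    euclNorm (c • v) = |c| * euclNorm v := by
  rw [euclNorm_eq', euclNorm_eq', ← Real.norm_eq_abs, ← norm_smul]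
  congr 1

lemma euclNorm_add_le {n : ℕ} (v w : Fin n → ℝ) :
    euclNorm (v + w) ≤ euclNorm v + euclNorm w := by
  rw [euclNorm_eq', euclNorm_eq', euclNorm_eq']
  exact norm_add_le _ _

lemma euclNorm_eq_zero {n : ℕ} {v : Fin n → ℝ} (h : euclNorm v = 0) : v = 0 := by
  rw [euclNorm_eq'] at h
  have := norm_eq_zero.mp h
  simpa using congrArg (WithLp.equiv 2 (Fin n → ℝ)) this

lemma euclNorm_sq {n : ℕ} (v : Fin n → ℝ) : euclNorm v ^ 2 = ∑ i, v i ^ 2 :=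
  Real.sq_sqrt (Finset.sum_nonneg fun _ _ => sq_nonneg _)

lemma trace_mul_sq_le {n : ℕ} (A B : Matrix (Fin n) (Fin n) ℝ) :
    (A * B).trace ^ 2 ≤ (∑ i, ∑ j, A i j ^ 2) * (∑ i, ∑ j, B i j ^ 2) := by
  have h1 : (A * B).trace = ∑ p : Fin n × Fin n, A p.1 p.2 * B p.2 p.1 := by
    rw [Matrix.trace, Fintype.sum_prod_type]
    simp [Matrix.diag, Matrix.mul_apply]
  have h2 : (∑ i, ∑ j, A i j ^ 2) = ∑ p : Fin n × Fin n, A p.1 p.2 ^ 2 := by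
    rw [Fintype.sum_prod_type]
  have h3 : (∑ i, ∑ j, B i j ^ 2) = ∑ p : Fin n × Fin n, B p.2 p.1 ^ 2 := by
    rw [Fintype.sum_prod_type]
    exact Finset.sum_comm
  rw [h1, h2, h3]
  exact Finset.sum_mul_sq_le_sq_mul_sq _ _ _

lemma frob_col {n : ℕ} (A : Matrix (Fin n) (Fin n) ℝ) :
    (∑ i, ∑ j, A i j ^ 2) = ∑ j, euclNorm (A *ᵥ Pi.single j 1) ^ 2 := by
  rw [Finset.sum_comm]
  congr 1; funext j
  rw [euclNorm_sq]
  congr 1; funext i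
  simp [Matrix.mulVec_single]

variable {n : ℕ} {E : Matrix (Fin n) (Fin n) ℝ}
  (hop : ∀ v : Fin n → ℝ, euclNorm (E.mulVec v) ≤ (1/4) * euclNorm v)
  {t : ℝ} (ht : t ∈ Set.Icc (0:ℝ) 1)

lemma mulVec_one_add_smul (v : Fin n → ℝ) :
    (1 + t • E) *ᵥ v = v + t • (E *ᵥ v) := by
  rw [Matrix.add_mulVec, Matrix.one_mulVec, Matrix.smul_mulVec]

include hop ht in
lemma det_one_add_smul_ne_zero : (1 + t • E).det ≠ 0 := by
  intro hdet
  obtain ⟨v, hv, hmv⟩ := (Matrix.exists_mulVec_eq_zero_iff).mpr hdet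
  rw [mulVec_one_add_smul] at hmv
  have hv' : v = (-t) • (E *ᵥ v) := by
    rw [neg_smul, eq_comm, neg_eq_iff_add_eq_zero, add_comm]; exact hmv
  have : euclNorm v ≤ (1/4) * euclNorm v := by
    calc euclNorm v = |(-t)| * euclNorm (E *ᵥ v) := by
          conv_lhs => rw [hv']
          rw [euclNorm_smul]
    _ ≤ 1 * ((1/4) * euclNorm v) := by
        apply mul_le_mul _ (hop v) (euclNorm_nonneg _) zero_le_one
        rw [abs_neg, abs_of_nonneg ht.1]; exact ht.2
    _ = (1/4) * euclNorm v := one_mul _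
  have h0 : euclNorm v = 0 := by nlinarith [euclNorm_nonneg v]
  exact hv (euclNorm_eq_zero h0)

include hop ht in
lemma inv_op_bound (w : Fin n → ℝ) :
    euclNorm ((1 + t • E)⁻¹ *ᵥ w) ≤ (4/3) * euclNorm w := by
  set u := (1 + t • E)⁻¹ *ᵥ w with hu
  have hdet := det_one_add_smul_ne_zero hop ht
  have hMu : (1 + t • E) *ᵥ u = w := by
    rw [hu, Matrix.mulVec_mulVec, Matrix.mul_nonsing_inv _ (isUnit_iff_ne_zero.2 hdet),
      Matrix.one_mulVec]
  have husum : u = w + (-t) • (E *ᵥ u) := by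
    rw [mulVec_one_add_smul] at hMu
    rw [neg_smul, ← hMu]; abel
  have : euclNorm u ≤ euclNorm w + (1/4) * euclNorm u := by
    calc euclNorm u = euclNorm (w + (-t) • (E *ᵥ u)) := by rw [← husum]
    _ ≤ euclNorm w + euclNorm ((-t) • (E *ᵥ u)) := euclNorm_add_le _ _
    _ ≤ euclNorm w + (1/4) * euclNorm u := by
        rw [euclNorm_smul]
        have h1 : |(-t)| ≤ 1 := by rw [abs_neg, abs_of_nonneg ht.1]; exact ht.2
        have := mul_le_mul h1 (hop u) (euclNorm_nonneg _) zero_le_one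
        simpa using add_le_add_left this (euclNorm w)
  linarith [euclNorm_nonneg u, euclNorm_nonneg w]

include hop ht in
lemma frob_inv_mul_le :
    (∑ i, ∑ j, ((1 + t • E)⁻¹ * E) i j ^ 2) ≤ (16/9) * ∑ i, ∑ j, E i j ^ 2 := by
  rw [frob_col, frob_col E, Finset.mul_sum]
  apply Finset.sum_le_sum
  intro j _
  have hcol : ((1 + t • E)⁻¹ * E) *ᵥ Pi.single j 1
      = (1 + t • E)⁻¹ *ᵥ (E *ᵥ Pi.single j 1) := by
    rw [Matrix.mulVec_mulVec]
  rw [hcol]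
  have h1 := inv_op_bound hop ht (E *ᵥ Pi.single j 1)
  have h2 := euclNorm_nonneg ((1 + t • E)⁻¹ *ᵥ (E *ᵥ Pi.single j 1))
  nlinarith [euclNorm_nonneg (E *ᵥ Pi.single j 1)]

lemma det_one_add_smul_factor {t : ℝ}
    (hdet : (1 + t • E).det ≠ 0) (u : ℝ) :
    (1 + u • E).det = (1 + t • E).det *
      (1 + ((1 + t • E)⁻¹ * E).trace * (u - t) +
        (det (1 + (X : ℝ[X]) • ((1 + t • E)⁻¹ * E).map C)).divX.divX.eval (u - t) * (u - t)^2) := by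
  set A := 1 + t • E with hA
  set B := A⁻¹ * E with hB
  have hAB : A * B = E := by
    rw [hB, ← mul_assoc, Matrix.mul_nonsing_inv _ (isUnit_iff_ne_zero.2 hdet), one_mul]
  have key : 1 + u • E = A * (1 + (u - t) • B) := by
    rw [mul_add, mul_one, Matrix.mul_smul, hAB, hA]
    rw [add_assoc, ← add_smul]
    ring_nf
  rw [key, Matrix.det_mul, Matrix.det_one_add_smul (u - t) B]

lemma hasDerivAt_logdet {t : ℝ}
    (hdet : (1 + t • E).det ≠ 0) :
    HasDerivAt (fun u => Real.log (1 + u • E).det - u * E.trace)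
      (((1 + t • E)⁻¹ * E).trace - E.trace) t := by
  set a := (1 + t • E).det with ha
  set b := ((1 + t • E)⁻¹ * E).trace with hb
  set q := (det (1 + (X : ℝ[X]) • ((1 + t • E)⁻¹ * E).map C)).divX.divX with hq
  set r : ℝ[X] := C a * ((C 1 + C b * X + q * X^2).comp (X - C t)) with hr
  have hfun : (fun u => (1 + u • E).det) = fun u => r.eval u := by
    funext u
    rw [det_one_add_smul_factor hdet u, hr]
    simp only [eval_mul, eval_C, eval_comp, eval_add, eval_pow, eval_X, eval_sub, eval_one]
    rfl
  have hD : HasDerivAt (fun u => (1 + u • E).det) (r.derivative.eval t) t := by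
    rw [hfun]; exact r.hasDerivAt t
  have hder : r.derivative.eval t = a * b := by
    rw [hr, Polynomial.derivative_mul, Polynomial.derivative_comp]
    simp [Polynomial.derivative_mul]
  rw [hder] at hD
  have hne : (fun u => (1 + u • E).det) t ≠ 0 := by simpa [← ha] using hdet
  have hlog := hD.log hne
  have hval : a * b / (fun u => (1 + u • E).det) t = b := by
    field_simp [← ha]
    rw [← ha]; ring
  rw [hval] at hlog
  exact hlog.sub (hasDerivAt_mul_const E.trace)

include hop ht in
lemma deriv_bound :
    |((1 + t • E)⁻¹ * E).trace - E.trace| ≤ t * ((4/3) * ∑ i, ∑ j, E i j ^ 2) := by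
  set K := ∑ i, ∑ j, E i j ^ 2 with hK
  have hKnn : 0 ≤ K := Finset.sum_nonneg fun _ _ => Finset.sum_nonneg fun _ _ => sq_nonneg _
  have hdet := det_one_add_smul_ne_zero hop ht
  set B := (1 + t • E)⁻¹ * E with hB
  have hAB : (1 + t • E) * B = E := by
    rw [hB, ← mul_assoc, Matrix.mul_nonsing_inv _ (isUnit_iff_ne_zero.2 hdet), one_mul]
  have hBE : B - E = (-t) • (E * B) := by
    rw [add_mul, one_mul, Matrix.smul_mul] at hAB
    conv_lhs => rw [← hAB]
    rw [neg_smul]; abel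
  have htr : B.trace - E.trace = -t * (E * B).trace := by
    rw [← Matrix.trace_sub, hBE, Matrix.trace_smul, smul_eq_mul]
  have hsq : (E * B).trace ^ 2 ≤ ((4/3) * K) ^ 2 := by
    have h1 := trace_mul_sq_le E B
    have h2 := frob_inv_mul_le hop ht
    rw [← hB] at h2
    nlinarith
  have habs : |(E * B).trace| ≤ (4/3) * K := by
    rw [abs_le]
    constructor <;> nlinarith
  rw [htr, abs_mul, abs_neg, abs_of_nonneg ht.1]
  exact mul_le_mul_of_nonneg_left habs ht.1

end aux

/-- If `E` is a real `n×n` matrix with spectral (operator) norm at most `1/4`, then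
`|log det(I + E) − tr E| ≤ ‖E‖_F²`. -/
theorem logdet_trace_bound {n : ℕ} (E : Matrix (Fin n) (Fin n) ℝ)
    (hop : ∀ v : Fin n → ℝ, euclNorm (E.mulVec v) ≤ (1/4) * euclNorm v) :
    |Real.log (1 + E).det - E.trace| ≤ frobNorm E ^ 2 := by
  set K := ∑ i, ∑ j, E i j ^ 2 with hK
  have hKnn : 0 ≤ K := Finset.sum_nonneg fun _ _ => Finset.sum_nonneg fun _ _ => sq_nonneg _
  have hfrob : frobNorm E ^ 2 = K := Real.sq_sqrt hKnn
  set g : ℝ → ℝ := fun u => Real.log (1 + u • E).det - u * E.trace with hg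
  set g' : ℝ → ℝ := fun u => ((1 + u • E)⁻¹ * E).trace - E.trace with hg'
  have hderiv : ∀ x ∈ Set.Icc (0:ℝ) 1, HasDerivAt g (g' x) x := fun x hx =>
    hasDerivAt_logdet (det_one_add_smul_ne_zero hop hx)
  have hcont : ContinuousOn g (Set.Icc 0 1) := fun x hx =>
    (hderiv x hx).continuousAt.continuousWithinAt
  have hderiv' : ∀ x ∈ Set.Ico (0:ℝ) 1, HasDerivWithinAt g (g' x) (Set.Ici x) x := fun x hx =>
    (hderiv x ⟨hx.1, hx.2.le⟩).hasDerivWithinAt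
  have hB : ∀ x : ℝ, HasDerivAt (fun u => (2/3) * K * u ^ 2) ((4/3) * K * x) x := by
    intro x
    have := (hasDerivAt_pow 2 x).const_mul ((2/3) * K)
    exact this.congr_deriv (by rw [show (2:ℕ) - 1 = 1 from rfl]; push_cast; ring)
  have hg0 : ‖g 0‖ ≤ (2/3) * K * (0:ℝ) ^ 2 := by
    simp [hg]
  have hbound : ∀ x ∈ Set.Ico (0:ℝ) 1, ‖g' x‖ ≤ (4/3) * K * x := by
    intro x hx
    have := deriv_bound hop ⟨hx.1, hx.2.le⟩
    rw [Real.norm_eq_abs]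
    calc |g' x| ≤ x * ((4/3) * K) := this
    _ = (4/3) * K * x := by ring
  have key := image_norm_le_of_norm_deriv_right_le_deriv_boundary hcont hderiv' hg0 hB hbound
    (Set.right_mem_Icc.2 zero_le_one)
  have hg1 : g 1 = Real.log (1 + E).det - E.trace := by
    simp [hg]
  rw [hg1, Real.norm_eq_abs] at key
  rw [hfrob]
  calc |Real.log (1 + E).det - E.trace| ≤ (2/3) * K * (1:ℝ) ^ 2 := key
  _ ≤ K := by nlinarith
end

section
/- Let ψ : [0, ∞) → ℝⁿ solve the linear second-order ODE ψ''(t) + R(t)ψ(t) = 0 with ψ(0) = α and ψ'(0) = β, where R(t) is an n×n matrix with ‖R(t)‖₂ ≤ λ for all t in [0, ℓ]. Then for all 0 ≤ t ≤ ℓ, ‖ψ(t)‖₂ ≤ ‖α‖₂ cosh(√λ t) + (‖β‖₂/√λ) sinh(√λ t). -/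
lemma euclNorm_eq_norm {n : ℕ} (v : Fin n → ℝ) :
    euclNorm v = ‖(EuclideanSpace.equiv (Fin n) ℝ).symm v‖ := by
  simp [euclNorm, EuclideanSpace.norm_eq, Real.norm_eq_abs, sq_abs]


lemma integral_cosh (x u : ℝ) (hx : x ≠ 0) :
    ∫ s in (0:ℝ)..u, Real.cosh (x*s) = Real.sinh (x*u)/x := by
  have h : ∀ s ∈ Set.uIcc (0:ℝ) u, HasDerivAt (fun r => Real.sinh (x*r)/x) (Real.cosh (x*s)) s := by
    intro s _
    have := ((Real.hasDerivAt_sinh (x*s)).comp s ((hasDerivAt_id s).const_mul x)).div_const x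
    simpa [mul_comm, mul_div_assoc, mul_div_cancel_left₀ _ hx] using this
  have := intervalIntegral.integral_eq_sub_of_hasDerivAt h
    ((Real.continuous_cosh.comp (continuous_const.mul continuous_id)).intervalIntegrable 0 u)
  simpa using this

lemma integral_sinh (x u : ℝ) (hx : x ≠ 0) :
    ∫ s in (0:ℝ)..u, Real.sinh (x*s) = (Real.cosh (x*u) - 1)/x := by
  have h : ∀ s ∈ Set.uIcc (0:ℝ) u, HasDerivAt (fun r => Real.cosh (x*r)/x) (Real.sinh (x*s)) s := by
    intro s _
    have := ((Real.hasDerivAt_cosh (x*s)).comp s ((hasDerivAt_id s).const_mul x)).div_const x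
    simpa [mul_comm, mul_div_assoc, mul_div_cancel_left₀ _ hx] using this
  have := intervalIntegral.integral_eq_sub_of_hasDerivAt h
    ((Real.continuous_sinh.comp (continuous_const.mul continuous_id)).intervalIntegrable 0 u)
  rw [this]; rw [mul_zero, Real.cosh_zero, sub_div]

/-- Scalar Grönwall-type comparison for the pair of integral inequalities. -/
lemma gronwall_pair (ℓ lam : ℝ) (hℓ : 0 ≤ ℓ) (hlam : 0 < lam)
    (a b : ℝ → ℝ) (A B : ℝ)
    (ha0 : a 0 ≤ A)
    (hacont : ContinuousOn a (Set.Icc 0 ℓ)) (hbcont : ContinuousOn b (Set.Icc 0 ℓ))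
    (hab : ∀ t ∈ Set.Icc (0:ℝ) ℓ, a t ≤ A + ∫ s in (0:ℝ)..t, b s)
    (hba : ∀ t ∈ Set.Icc (0:ℝ) ℓ, b t ≤ B + lam * ∫ s in (0:ℝ)..t, a s) :
    ∀ t ∈ Set.Icc (0:ℝ) ℓ, a t ≤ A * Real.cosh (Real.sqrt lam * t)
      + B / Real.sqrt lam * Real.sinh (Real.sqrt lam * t) := by
  intro t ht
  set x := Real.sqrt lam with hxdef
  have hx : 0 < x := Real.sqrt_pos.mpr hlam
  have hxx : x * x = lam := Real.mul_self_sqrt hlam.le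
  have hch : Continuous fun s : ℝ => Real.cosh (x*s) :=
    Real.continuous_cosh.comp (continuous_const.mul continuous_id)
  have hsh : Continuous fun s : ℝ => Real.sinh (x*s) :=
    Real.continuous_sinh.comp (continuous_const.mul continuous_id)
  have hsinh : 0 ≤ Real.sinh (x*t) := Real.sinh_nonneg_iff.mpr (mul_nonneg hx.le ht.1)
  have hcosh : (1:ℝ) ≤ Real.cosh (x*t) := Real.one_le_cosh _
  -- ε-approximation
  have key : ∀ ε > (0:ℝ), a t ≤ (A+ε) * Real.cosh (x*t) + (B+ε)/x * Real.sinh (x*t) := by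
    intro ε hε
    set φ : ℝ → ℝ := fun s => (A+ε) * Real.cosh (x*s) + (B+ε)/x * Real.sinh (x*s) with hφdef
    set φD : ℝ → ℝ := fun s => x*(A+ε) * Real.sinh (x*s) + (B+ε) * Real.cosh (x*s) with hφDdef
    have hφ0 : φ 0 = A + ε := by simp [hφdef]
    have hφcont : Continuous φ := (continuous_const.mul hch).add (continuous_const.mul hsh)
    have hφDcont : Continuous φD := (continuous_const.mul hsh).add (continuous_const.mul hch)
    have hφint : ∀ u : ℝ, B + lam * ∫ s in (0:ℝ)..u, φ s = φD u - ε := by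
      intro u
      have h1 : ∫ s in (0:ℝ)..u, φ s
          = (A+ε) * (Real.sinh (x*u)/x) + (B+ε)/x * ((Real.cosh (x*u)-1)/x) := by
        rw [hφdef]
        rw [intervalIntegral.integral_add (f := fun s => (A+ε) * Real.cosh (x*s))
          (g := fun s => (B+ε)/x * Real.sinh (x*s))
          ((continuous_const.mul hch).intervalIntegrable 0 u)
          ((continuous_const.mul hsh).intervalIntegrable 0 u)]
        rw [intervalIntegral.integral_const_mul, intervalIntegral.integral_const_mul,
          integral_cosh x u hx.ne', integral_sinh x u hx.ne']
      rw [h1, hφDdef, ← hxx]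
      field_simp
      ring
    -- by contradiction
    by_contra hcon
    replace hcon : φ t < a t := not_le.mp hcon
    set S : Set ℝ := Set.Icc 0 ℓ ∩ {s | 0 ≤ a s - φ s} with hSdef
    have htS : t ∈ S := ⟨ht, by simp only [Set.mem_setOf_eq, sub_nonneg]; exact hcon.le⟩
    have hSclosed : IsClosed S :=
      ContinuousOn.preimage_isClosed_of_isClosed
        (hacont.sub hφcont.continuousOn) isClosed_Icc isClosed_Ici
    have hSbdd : BddBelow S := ⟨0, fun s hs => hs.1.1⟩
    set t₀ := sInf S with ht₀def
    have ht₀S : t₀ ∈ S := hSclosed.csInf_mem ⟨t, htS⟩ hSbdd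
    have ht₀Icc : t₀ ∈ Set.Icc (0:ℝ) ℓ := ht₀S.1
    have hge : φ t₀ ≤ a t₀ := sub_nonneg.mp ht₀S.2
    have h0S : (0:ℝ) ∉ S := by
      intro h
      have h2 : φ 0 ≤ a 0 := sub_nonneg.mp h.2
      rw [hφ0] at h2; linarith
    have ht₀pos : 0 < t₀ := lt_of_le_of_ne ht₀Icc.1 (by intro h; exact h0S (h ▸ ht₀S))
    -- a ≤ φ on [0, t₀)
    have hlt : ∀ s ∈ Set.Ico (0:ℝ) t₀, a s ≤ φ s := by
      intro s hs
      by_contra hcon2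
      have : s ∈ S := ⟨⟨hs.1, hs.2.le.trans ht₀Icc.2⟩,
        sub_nonneg.mpr (not_le.mp hcon2).le⟩
      exact absurd (csInf_le hSbdd this) (not_le.mpr hs.2)
    -- extend to [0, t₀] by continuity
    have hle : ∀ s ∈ Set.Icc (0:ℝ) t₀, a s ≤ φ s := by
      have hsub : Set.Icc (0:ℝ) t₀ ⊆ Set.Icc 0 ℓ := Set.Icc_subset_Icc le_rfl ht₀Icc.2
      set T : Set ℝ := Set.Icc 0 t₀ ∩ {s | 0 ≤ φ s - a s} with hTdef
      have hTclosed : IsClosed T :=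
        ContinuousOn.preimage_isClosed_of_isClosed
          (hφcont.continuousOn.sub (hacont.mono hsub)) isClosed_Icc isClosed_Ici
      have hIcoT : Set.Ico (0:ℝ) t₀ ⊆ T := fun s hs =>
        ⟨⟨hs.1, hs.2.le⟩, sub_nonneg.mpr (hlt s hs)⟩
      have hsubT : Set.Icc (0:ℝ) t₀ ⊆ T := by
        rw [← closure_Ico ht₀pos.ne]
        exact hTclosed.closure_subset_iff.mpr hIcoT
      intro s hs
      exact sub_nonneg.mp (hsubT hs).2
    -- bound b on [0,t₀]
    have hbφ : ∀ u ∈ Set.Icc (0:ℝ) t₀, b u ≤ φD u - ε := by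
      intro u hu
      have huℓ : u ∈ Set.Icc (0:ℝ) ℓ := ⟨hu.1, hu.2.trans ht₀Icc.2⟩
      have hmono : ∫ s in (0:ℝ)..u, a s ≤ ∫ s in (0:ℝ)..u, φ s := by
        apply intervalIntegral.integral_mono_on hu.1
          ((hacont.mono (Set.Icc_subset_Icc le_rfl huℓ.2)).intervalIntegrable_of_Icc hu.1)
          (hφcont.intervalIntegrable 0 u)
        intro s hs
        exact hle s ⟨hs.1, hs.2.trans hu.2⟩
      calc b u ≤ B + lam * ∫ s in (0:ℝ)..u, a s := hba u huℓ
        _ ≤ B + lam * ∫ s in (0:ℝ)..u, φ s := by nlinarith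
        _ = φD u - ε := hφint u
    -- final contradiction
    have hφD : ∫ s in (0:ℝ)..t₀, φD s = φ t₀ - φ 0 := by
      apply intervalIntegral.integral_eq_sub_of_hasDerivAt
      · intro s _
        have h1 := ((Real.hasDerivAt_cosh (x*s)).comp s ((hasDerivAt_id s).const_mul x)).const_mul (A+ε)
        have h2 := ((Real.hasDerivAt_sinh (x*s)).comp s ((hasDerivAt_id s).const_mul x)).const_mul ((B+ε)/x)
        have h3 := h1.add h2
        rw [hφdef, hφDdef]
        convert h3 using 1
        · funext y; rfl
        field_simp
      · exact hφDcont.intervalIntegrable 0 t₀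
    have hbint : IntervalIntegrable b MeasureTheory.volume 0 t₀ :=
      (hbcont.mono (Set.Icc_subset_Icc le_rfl ht₀Icc.2)).intervalIntegrable_of_Icc ht₀Icc.1
    have hfin : a t₀ ≤ φ t₀ - ε - ε * t₀ := by
      have h1 : ∫ s in (0:ℝ)..t₀, b s ≤ ∫ s in (0:ℝ)..t₀, (φD s - ε) :=
        intervalIntegral.integral_mono_on ht₀Icc.1 hbint
          ((hφDcont.sub continuous_const).intervalIntegrable 0 t₀) hbφ
      have h2 : ∫ s in (0:ℝ)..t₀, (φD s - ε) = (φ t₀ - (A+ε)) - ε * t₀ := by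
        rw [intervalIntegral.integral_sub (hφDcont.intervalIntegrable 0 t₀)
          intervalIntegrable_const, hφD, hφ0, intervalIntegral.integral_const]
        simp [mul_comm]
      calc a t₀ ≤ A + ∫ s in (0:ℝ)..t₀, b s := hab t₀ ht₀Icc
        _ ≤ A + ((φ t₀ - (A+ε)) - ε * t₀) := by linarith [h1.trans_eq h2]
        _ = φ t₀ - ε - ε * t₀ := by ring
    nlinarith [ht₀pos]
  -- remove ε
  have hC : 0 < Real.cosh (x*t) + Real.sinh (x*t)/x := by positivity
  refine le_of_forall_pos_le_add ?_
  intro δ hδ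
  have hε : 0 < δ / (Real.cosh (x*t) + Real.sinh (x*t)/x) := div_pos hδ hC
  calc a t ≤ (A + δ/(Real.cosh (x*t) + Real.sinh (x*t)/x)) * Real.cosh (x*t)
        + (B + δ/(Real.cosh (x*t) + Real.sinh (x*t)/x))/x * Real.sinh (x*t) := key _ hε
    _ = A * Real.cosh (x*t) + B/x * Real.sinh (x*t)
        + δ/(Real.cosh (x*t) + Real.sinh (x*t)/x) * (Real.cosh (x*t) + Real.sinh (x*t)/x) := by
        field_simp; ring
    _ = A * Real.cosh (x*t) + B/x * Real.sinh (x*t) + δ := by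
        rw [div_mul_cancel₀ _ hC.ne']

/-- Solutions of the Jacobi-type ODE `ψ'' + R(t)ψ = 0` with `‖R(t)‖₂ ≤ λ` satisfy
`‖ψ(t)‖ ≤ ‖α‖ cosh(√λ t) + (‖β‖/√λ) sinh(√λ t)` on `[0, ℓ]`. -/
theorem jacobi_ode_growth_bound {n : ℕ} (ℓ lam : ℝ) (hℓ : 0 ≤ ℓ) (hlam : 0 < lam)
    (R : ℝ → Matrix (Fin n) (Fin n) ℝ) (hRcont : ContinuousOn R (Set.Icc (0:ℝ) ℓ))
    (hR : ∀ t ∈ Set.Icc (0:ℝ) ℓ, ∀ v : Fin n → ℝ,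
      euclNorm ((R t).mulVec v) ≤ lam * euclNorm v)
    (ψ ψ' : ℝ → Fin n → ℝ) (α β : Fin n → ℝ)
    (hψ : ∀ t ∈ Set.Icc (0:ℝ) ℓ, HasDerivAt ψ (ψ' t) t)
    (hψ' : ∀ t ∈ Set.Icc (0:ℝ) ℓ, HasDerivAt ψ' (-((R t).mulVec (ψ t))) t)
    (h0 : ψ 0 = α) (h0' : ψ' 0 = β) :
    ∀ t ∈ Set.Icc (0:ℝ) ℓ,
      euclNorm (ψ t) ≤ euclNorm α * Real.cosh (Real.sqrt lam * t)
        + euclNorm β / Real.sqrt lam * Real.sinh (Real.sqrt lam * t) := by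

  set L := (EuclideanSpace.equiv (Fin n) ℝ).symm with hLdef
  set a : ℝ → ℝ := fun s => euclNorm (ψ s) with hadef
  set b : ℝ → ℝ := fun s => euclNorm (ψ' s) with hbdef
  -- E-valued curves
  have hΨd : ∀ s ∈ Set.Icc (0:ℝ) ℓ, HasDerivAt (fun r => L (ψ r)) (L (ψ' s)) s := by
    intro s hs
    exact (L.toContinuousLinearMap.hasFDerivAt.comp_hasDerivAt s (hψ s hs))
  have hΨd' : ∀ s ∈ Set.Icc (0:ℝ) ℓ, HasDerivAt (fun r => L (ψ' r)) (L (-((R s).mulVec (ψ s)))) s := by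
    intro s hs
    exact (L.toContinuousLinearMap.hasFDerivAt.comp_hasDerivAt s (hψ' s hs))
  -- continuity
  have hψcont : ContinuousOn ψ (Set.Icc 0 ℓ) := fun s hs => ((hψ s hs).continuousAt).continuousWithinAt
  have hψ'cont : ContinuousOn ψ' (Set.Icc 0 ℓ) := fun s hs => ((hψ' s hs).continuousAt).continuousWithinAt
  have hacont : ContinuousOn a (Set.Icc 0 ℓ) := by
    have : ContinuousOn (fun s => ‖L (ψ s)‖) (Set.Icc 0 ℓ) :=
      (L.continuous.comp_continuousOn hψcont).norm
    simpa only [hadef, euclNorm_eq_norm] using this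
  have hbcont : ContinuousOn b (Set.Icc 0 ℓ) := by
    have : ContinuousOn (fun s => ‖L (ψ' s)‖) (Set.Icc 0 ℓ) :=
      (L.continuous.comp_continuousOn hψ'cont).norm
    simpa only [hbdef, euclNorm_eq_norm] using this
  -- integral inequality 1
  have hab : ∀ t ∈ Set.Icc (0:ℝ) ℓ, a t ≤ euclNorm α + ∫ s in (0:ℝ)..t, b s := by
    intro t ht
    have hsub : Set.uIcc (0:ℝ) t ⊆ Set.Icc 0 ℓ := by
      rw [Set.uIcc_of_le ht.1]; exact Set.Icc_subset_Icc le_rfl ht.2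
    have hint : IntervalIntegrable (fun r => L (ψ' r)) MeasureTheory.volume 0 t :=
      ((L.continuous.comp_continuousOn hψ'cont).mono hsub).intervalIntegrable
    have hftc : (∫ s in (0:ℝ)..t, L (ψ' s)) = L (ψ t) - L (ψ 0) :=
      intervalIntegral.integral_eq_sub_of_hasDerivAt (fun s hs => hΨd s (hsub hs)) hint
    have h1 : ‖L (ψ t)‖ ≤ ‖L (ψ 0)‖ + ‖∫ s in (0:ℝ)..t, L (ψ' s)‖ := by
      rw [hftc]
      have := norm_sub_norm_le (L (ψ t)) (L (ψ 0))
      linarith [norm_sub_norm_le (L (ψ t)) (L (ψ 0))]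
    have h2 : ‖∫ s in (0:ℝ)..t, L (ψ' s)‖ ≤ ∫ s in (0:ℝ)..t, ‖L (ψ' s)‖ :=
      intervalIntegral.norm_integral_le_integral_norm ht.1
    have h3 : (∫ s in (0:ℝ)..t, ‖L (ψ' s)‖) = ∫ s in (0:ℝ)..t, b s := by
      simp only [hbdef, euclNorm_eq_norm]
      rfl
    calc a t = ‖L (ψ t)‖ := by rw [hadef]; exact euclNorm_eq_norm _
      _ ≤ ‖L (ψ 0)‖ + ∫ s in (0:ℝ)..t, ‖L (ψ' s)‖ := by linarith
      _ = euclNorm α + ∫ s in (0:ℝ)..t, b s := by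
          rw [h3, h0, euclNorm_eq_norm]
  -- integral inequality 2
  have hba : ∀ t ∈ Set.Icc (0:ℝ) ℓ, b t ≤ euclNorm β + lam * ∫ s in (0:ℝ)..t, a s := by
    intro t ht
    have hsub : Set.uIcc (0:ℝ) t ⊆ Set.Icc 0 ℓ := by
      rw [Set.uIcc_of_le ht.1]; exact Set.Icc_subset_Icc le_rfl ht.2
    have hRψcont : ContinuousOn (fun s => (R s).mulVec (ψ s)) (Set.Icc 0 ℓ) := by
      apply continuousOn_pi.mpr
      intro i
      simp only [Matrix.mulVec, dotProduct]
      apply continuousOn_finset_sum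
      intro k _
      exact ((continuousOn_pi.mp ((continuousOn_pi.mp hRcont) i)) k).mul
        ((continuousOn_pi.mp hψcont) k)
    have hDcont : ContinuousOn (fun s => L (-((R s).mulVec (ψ s)))) (Set.Icc 0 ℓ) :=
      L.continuous.comp_continuousOn hRψcont.neg
    have hint : IntervalIntegrable (fun s => L (-((R s).mulVec (ψ s)))) MeasureTheory.volume 0 t :=
      (hDcont.mono hsub).intervalIntegrable
    have hftc : (∫ s in (0:ℝ)..t, L (-((R s).mulVec (ψ s)))) = L (ψ' t) - L (ψ' 0) :=
      intervalIntegral.integral_eq_sub_of_hasDerivAt (fun s hs => hΨd' s (hsub hs)) hint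
    have h2 : ‖∫ s in (0:ℝ)..t, L (-((R s).mulVec (ψ s)))‖
        ≤ ∫ s in (0:ℝ)..t, ‖L (-((R s).mulVec (ψ s)))‖ :=
      intervalIntegral.norm_integral_le_integral_norm ht.1
    have h3 : ∫ s in (0:ℝ)..t, ‖L (-((R s).mulVec (ψ s)))‖ ≤ ∫ s in (0:ℝ)..t, lam * a s := by
      apply intervalIntegral.integral_mono_on ht.1
        ((hDcont.norm.mono (Set.uIcc_of_le ht.1 ▸ hsub)).intervalIntegrable_of_Icc ht.1)
        (((hacont.mono (Set.uIcc_of_le ht.1 ▸ hsub)).const_smul lam).intervalIntegrable_of_Icc ht.1)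
      intro s hs
      have hsℓ : s ∈ Set.Icc (0:ℝ) ℓ := ⟨hs.1, hs.2.trans ht.2⟩
      have : ‖L (-((R s).mulVec (ψ s)))‖ = euclNorm ((R s).mulVec (ψ s)) := by
        rw [map_neg, norm_neg, euclNorm_eq_norm]
      rw [this]
      exact hR s hsℓ (ψ s)
    have h4 : (∫ s in (0:ℝ)..t, lam * a s) = lam * ∫ s in (0:ℝ)..t, a s :=
      intervalIntegral.integral_const_mul _ _
    calc b t = ‖L (ψ' t)‖ := by rw [hbdef]; exact euclNorm_eq_norm _
      _ ≤ ‖L (ψ' 0)‖ + ‖∫ s in (0:ℝ)..t, L (-((R s).mulVec (ψ s)))‖ := by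
          rw [hftc]; linarith [norm_sub_norm_le (L (ψ' t)) (L (ψ' 0))]
      _ ≤ euclNorm β + lam * ∫ s in (0:ℝ)..t, a s := by
          rw [h0', euclNorm_eq_norm]
          linarith [h2.trans (h3.trans_eq h4)]
  have ha0 : a 0 ≤ euclNorm α := by rw [hadef]; simp [h0]
  exact gronwall_pair ℓ lam hℓ hlam a b (euclNorm α) (euclNorm β) ha0 hacont hbcont hab hba
end

section
/- Let ψ : [0, ∞) → ℝⁿ solve ψ''(t) + R(t)ψ(t) = 0 with ψ(0) = α, ψ'(0) = β, where ‖R(t)‖₂ ≤ λ for all 0 ≤ t ≤ 1/√λ. Then for 0 ≤ t ≤ 1/√λ: ‖ψ(t) − α − βt‖₂ ≤ λt²‖α‖₂ + (λt³/5)‖β‖₂, and ‖ψ'(t) − β‖₂ ≤ 2λt‖α‖₂ + (3λt²/5)‖β‖₂. -/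
open Set MeasureTheory intervalIntegral

/-- integral monotonicity needing the pointwise bound only on `Ico a b`. -/
lemma integral_mono_Ico {a b : ℝ} (hab : a ≤ b) {f g : ℝ → ℝ}
    (hf : IntervalIntegrable f volume a b) (hg : IntervalIntegrable g volume a b)
    (h : ∀ s ∈ Set.Ico a b, f s ≤ g s) :
    ∫ s in a..b, f s ≤ ∫ s in a..b, g s := by
  apply intervalIntegral.integral_mono_ae_restrict hab hf hg
  rw [Filter.EventuallyLE, MeasureTheory.ae_restrict_iff' measurableSet_Icc]
  have h1 : ∀ᵐ s : ℝ, s ≠ b := by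
    rw [MeasureTheory.ae_iff]
    simpa using Real.volume_singleton
  filter_upwards [h1] with s hs hsIcc
  exact h s ⟨hsIcc.1, lt_of_le_of_ne hsIcc.2 hs⟩

lemma jacobi_aux {E : Type*} [NormedAddCommGroup E] [NormedSpace ℝ E] [CompleteSpace E]
    (lam T : ℝ) (hlam : 0 < lam) (hT : ∀ t ∈ Icc (0:ℝ) T, lam * t ^ 2 ≤ 1)
    (Ψ Ψ' F : ℝ → E) (α β : E)
    (hΨ : ∀ t ∈ Icc (0:ℝ) T, HasDerivAt Ψ (Ψ' t) t)
    (hΨ' : ∀ t ∈ Icc (0:ℝ) T, HasDerivAt Ψ' (-(F t)) t)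
    (hFc : ContinuousOn F (Icc (0:ℝ) T))
    (hF : ∀ t ∈ Icc (0:ℝ) T, ‖F t‖ ≤ lam * ‖Ψ t‖)
    (h0 : Ψ 0 = α) (h0' : Ψ' 0 = β) :
    ∀ t ∈ Icc (0:ℝ) T,
      ‖Ψ t - α - t • β‖ ≤ lam * t ^ 2 * ‖α‖ + lam * t ^ 3 / 5 * ‖β‖ ∧
      ‖Ψ' t - β‖ ≤ 2 * lam * t * ‖α‖ + 3 * lam * t ^ 2 / 5 * ‖β‖ := by
  have hΨc : ContinuousOn Ψ (Icc 0 T) := fun t ht => ((hΨ t ht).continuousAt).continuousWithinAt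
  have hΨ'c : ContinuousOn Ψ' (Icc 0 T) := fun t ht => ((hΨ' t ht).continuousAt).continuousWithinAt
  have hsub : ∀ t ∈ Icc (0:ℝ) T, Icc (0:ℝ) t ⊆ Icc 0 T := fun t ht => Icc_subset_Icc le_rfl ht.2
  set A := ‖α‖ with hA
  set B := ‖β‖ with hB
  have hA0 : 0 ≤ A := norm_nonneg _
  have hB0 : 0 ≤ B := norm_nonneg _
  -- representation of Ψ'
  have hrep' : ∀ t ∈ Icc (0:ℝ) T, Ψ' t - β = ∫ s in (0:ℝ)..t, -(F s) := by
    intro t ht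
    have h1 : ∫ s in (0:ℝ)..t, -(F s) = Ψ' t - Ψ' 0 := by
      apply intervalIntegral.integral_eq_sub_of_hasDerivAt
      · intro s hs
        rw [uIcc_of_le ht.1] at hs
        exact hΨ' s (hsub t ht hs)
      · apply ContinuousOn.intervalIntegrable
        rw [uIcc_of_le ht.1]
        exact (hFc.mono (hsub t ht)).neg
    rw [h1, h0']
  -- representation of Ψ
  have hrep : ∀ t ∈ Icc (0:ℝ) T, Ψ t - α - t • β = ∫ s in (0:ℝ)..t, (Ψ' s - β) := by
    intro t ht
    have h1 : ∫ s in (0:ℝ)..t, (Ψ' s - β) = (Ψ t - t • β) - (Ψ 0 - (0:ℝ) • β) := by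
      apply intervalIntegral.integral_eq_sub_of_hasDerivAt (f := fun s => Ψ s - s • β)
      · intro s hs
        rw [uIcc_of_le ht.1] at hs
        have h2 : HasDerivAt (fun y : ℝ => y • β) ((1:ℝ) • β) s := (hasDerivAt_id s).smul_const β
        exact ((hΨ s (hsub t ht hs)).sub h2).congr_deriv (by simp)
      · apply ContinuousOn.intervalIntegrable
        rw [uIcc_of_le ht.1]
        exact ((hΨ'c.mono (hsub t ht)).sub continuousOn_const)
    rw [h1, h0, zero_smul, sub_zero]; abel
  -- the key estimate, parametrized by slack ε
  have key : ∀ ε : ℝ, 0 ≤ ε → ∀ t ∈ Icc (0:ℝ) T,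
      (∀ s ∈ Ico (0:ℝ) t, ‖Ψ s‖ ≤ 2 * A + 6/5 * s * B + ε) →
      (∀ s ∈ Icc (0:ℝ) t, ‖Ψ' s - β‖ ≤ lam * ((2 * A + ε) * s + 3/5 * B * s ^ 2)) ∧
      ‖Ψ t - α - t • β‖ ≤ lam * ((A + ε/2) * t ^ 2 + 1/5 * B * t ^ 3) := by
    intro ε hε t ht hg
    have hineq1 : ∀ s ∈ Icc (0:ℝ) t, ‖Ψ' s - β‖ ≤ lam * ((2 * A + ε) * s + 3/5 * B * s ^ 2) := by
      intro s hs
      have hsT : s ∈ Icc (0:ℝ) T := hsub t ht hs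
      rw [hrep' s hsT]
      calc ‖∫ u in (0:ℝ)..s, -(F u)‖ ≤ ∫ u in (0:ℝ)..s, ‖-(F u)‖ :=
            intervalIntegral.norm_integral_le_integral_norm hs.1
        _ ≤ ∫ u in (0:ℝ)..s, (lam * (2 * A + 6/5 * u * B + ε)) := by
            apply integral_mono_Ico hs.1
            · apply ContinuousOn.intervalIntegrable
              rw [uIcc_of_le hs.1]
              exact ((hFc.mono (hsub s hsT)).neg).norm
            · apply ContinuousOn.intervalIntegrable
              fun_prop
            · intro u hu
              have huT : u ∈ Icc (0:ℝ) T := hsub s hsT ⟨hu.1, hu.2.le⟩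
              rw [norm_neg]
              refine le_trans (hF u huT) ?_
              have : ‖Ψ u‖ ≤ 2 * A + 6/5 * u * B + ε :=
                hg u ⟨hu.1, lt_of_lt_of_le hu.2 hs.2⟩
              nlinarith [hlam.le]
        _ = lam * ((2 * A + ε) * s + 3/5 * B * s ^ 2) := by
            have hanti : ∀ u : ℝ, HasDerivAt
                (fun u : ℝ => lam * ((2 * A + ε) * u + 3/5 * B * u ^ 2))
                (lam * (2 * A + 6/5 * u * B + ε)) u := by
              intro u
              have h1 : HasDerivAt (fun u : ℝ => (2 * A + ε) * u) (2 * A + ε) u := by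
                simpa using (hasDerivAt_id u).const_mul (2 * A + ε)
              have h2 : HasDerivAt (fun u : ℝ => 3/5 * B * u ^ 2) (3/5 * B * (2 * u)) u := by
                simpa using (hasDerivAt_pow 2 u).const_mul (3/5 * B)
              have := ((h1.add h2).const_mul lam)
              exact this.congr_deriv (by ring)
            have := intervalIntegral.integral_eq_sub_of_hasDerivAt
              (a := (0:ℝ)) (b := s)
              (f := fun u : ℝ => lam * ((2 * A + ε) * u + 3/5 * B * u ^ 2))
              (fun u _ => hanti u)
              (by apply ContinuousOn.intervalIntegrable; fun_prop)
            rw [this]; ring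
    refine ⟨hineq1, ?_⟩
    rw [hrep t ht]
    calc ‖∫ s in (0:ℝ)..t, (Ψ' s - β)‖ ≤ ∫ s in (0:ℝ)..t, ‖Ψ' s - β‖ :=
          intervalIntegral.norm_integral_le_integral_norm ht.1
      _ ≤ ∫ s in (0:ℝ)..t, (lam * ((2 * A + ε) * s + 3/5 * B * s ^ 2)) := by
          apply intervalIntegral.integral_mono_on ht.1
          · apply ContinuousOn.intervalIntegrable
            rw [uIcc_of_le ht.1]
            exact ((hΨ'c.mono (hsub t ht)).sub continuousOn_const).norm
          · apply ContinuousOn.intervalIntegrable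
            fun_prop
          · exact hineq1
      _ = lam * ((A + ε/2) * t ^ 2 + 1/5 * B * t ^ 3) := by
          have hanti : ∀ u : ℝ, HasDerivAt
              (fun u : ℝ => lam * ((A + ε/2) * u ^ 2 + 1/5 * B * u ^ 3))
              (lam * ((2 * A + ε) * u + 3/5 * B * u ^ 2)) u := by
            intro u
            have h1 : HasDerivAt (fun u : ℝ => (A + ε/2) * u ^ 2) ((A + ε/2) * (2 * u)) u := by
              simpa using (hasDerivAt_pow 2 u).const_mul (A + ε/2)
            have h2 : HasDerivAt (fun u : ℝ => 1/5 * B * u ^ 3) (1/5 * B * (3 * u ^ 2)) u := by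
              simpa using (hasDerivAt_pow 3 u).const_mul (1/5 * B)
            have := ((h1.add h2).const_mul lam)
            exact this.congr_deriv (by ring)
          have := intervalIntegral.integral_eq_sub_of_hasDerivAt
            (a := (0:ℝ)) (b := t)
            (f := fun u : ℝ => lam * ((A + ε/2) * u ^ 2 + 1/5 * B * u ^ 3))
            (fun u _ => hanti u)
            (by apply ContinuousOn.intervalIntegrable; fun_prop)
          rw [this]; ring
  -- bootstrap: the a priori bound on ‖Ψ‖
  have hboot : ∀ t ∈ Icc (0:ℝ) T, ‖Ψ t‖ ≤ 2 * A + 6/5 * t * B := by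
    intro t ht
    refine le_of_forall_pos_le_add ?_
    intro ε hε
    by_contra hcon
    push_neg at hcon
    set Sbad : Set ℝ := {s ∈ Icc (0:ℝ) T | 2 * A + 6/5 * s * B + ε ≤ ‖Ψ s‖} with hSbad
    have hne : Sbad.Nonempty := ⟨t, ht, hcon.le⟩
    have hclosed : IsClosed Sbad := by
      have : Sbad = Icc (0:ℝ) T ∩ (fun s => ‖Ψ s‖ - (2 * A + 6/5 * s * B + ε)) ⁻¹' (Ici 0) := by
        ext s; simp [hSbad, Set.mem_setOf_eq, sub_nonneg, and_comm]
      rw [this]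
      apply ContinuousOn.preimage_isClosed_of_isClosed _ isClosed_Icc isClosed_Ici
      exact hΨc.norm.sub (by fun_prop)
    have hbdd : BddBelow Sbad := ⟨0, fun s hs => hs.1.1⟩
    set τ := sInf Sbad with hτ
    have hτmem : τ ∈ Sbad := hclosed.csInf_mem hne hbdd
    have hτT : τ ∈ Icc (0:ℝ) T := hτmem.1
    have hlow : ∀ s ∈ Ico (0:ℝ) τ, ‖Ψ s‖ ≤ 2 * A + 6/5 * s * B + ε := by
      intro s hs
      by_contra hcs
      push_neg at hcs
      have : s ∈ Sbad := ⟨⟨hs.1, hs.2.le.trans hτT.2⟩, hcs.le⟩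
      exact absurd (csInf_le hbdd this) (not_le.2 hs.2)
    obtain ⟨-, hkey2⟩ := key ε hε.le τ hτT hlow
    -- triangle inequality to bound ‖Ψ τ‖
    have htri : ‖Ψ τ‖ ≤ ‖Ψ τ - α - τ • β‖ + A + τ * B := by
      have h1 : Ψ τ = (Ψ τ - α - τ • β) + α + τ • β := by abel
      calc ‖Ψ τ‖ = ‖(Ψ τ - α - τ • β) + α + τ • β‖ := by rw [← h1]
        _ ≤ ‖(Ψ τ - α - τ • β) + α‖ + ‖τ • β‖ := norm_add_le _ _
        _ ≤ ‖Ψ τ - α - τ • β‖ + ‖α‖ + ‖τ • β‖ := by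
            have := norm_add_le (Ψ τ - α - τ • β) α
            linarith
        _ ≤ ‖Ψ τ - α - τ • β‖ + A + τ * B := by
            rw [norm_smul, Real.norm_eq_abs, abs_of_nonneg hτT.1]
    have hlt1 : lam * τ ^ 2 ≤ 1 := hT τ hτT
    have hτ0 : 0 ≤ τ := hτT.1
    have hcontra : ‖Ψ τ‖ < 2 * A + 6/5 * τ * B + ε := by
      have h3 : lam * ((A + ε/2) * τ ^ 2 + 1/5 * B * τ ^ 3) ≤ (A + ε/2) + 1/5 * B * τ := by
        nlinarith [hlam.le, mul_nonneg hτ0 hB0]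
      calc ‖Ψ τ‖ ≤ ‖Ψ τ - α - τ • β‖ + A + τ * B := htri
        _ ≤ lam * ((A + ε/2) * τ ^ 2 + 1/5 * B * τ ^ 3) + A + τ * B := by linarith
        _ ≤ (A + ε/2) + 1/5 * B * τ + A + τ * B := by linarith
        _ < 2 * A + 6/5 * τ * B + ε := by nlinarith
    exact absurd hτmem.2 (not_le.2 hcontra)
  -- final bounds
  intro t ht
  obtain ⟨h1, h2⟩ := key 0 le_rfl t ht (fun s hs => by
    have := hboot s ⟨hs.1, hs.2.le.trans ht.2⟩
    linarith)
  constructor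
  · calc ‖Ψ t - α - t • β‖ ≤ lam * ((A + 0/2) * t ^ 2 + 1/5 * B * t ^ 3) := h2
      _ = lam * t ^ 2 * A + lam * t ^ 3 / 5 * B := by ring
  · calc ‖Ψ' t - β‖ ≤ lam * ((2 * A + 0) * t + 3/5 * B * t ^ 2) := h1 t ⟨ht.1, le_rfl⟩
      _ = 2 * lam * t * A + 3 * lam * t ^ 2 / 5 * B := by ring

/-- Approximate linearity of solutions of `ψ'' + R(t)ψ = 0` with `‖R(t)‖₂ ≤ λ`:
for `0 ≤ t ≤ 1/√λ`, `‖ψ(t) − α − βt‖ ≤ λt²‖α‖ + (λt³/5)‖β‖` and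
`‖ψ'(t) − β‖ ≤ 2λt‖α‖ + (3λt²/5)‖β‖`. -/
theorem jacobi_ode_linear_approx {n : ℕ} (lam : ℝ) (hlam : 0 < lam)
    (R : ℝ → Matrix (Fin n) (Fin n) ℝ)
    (hRcont : ContinuousOn R (Set.Icc (0:ℝ) (1 / Real.sqrt lam)))
    (hR : ∀ t ∈ Set.Icc (0:ℝ) (1 / Real.sqrt lam), ∀ v : Fin n → ℝ,
      euclNorm ((R t).mulVec v) ≤ lam * euclNorm v)
    (ψ ψ' : ℝ → Fin n → ℝ) (α β : Fin n → ℝ)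
    (hψ : ∀ t ∈ Set.Icc (0:ℝ) (1 / Real.sqrt lam), HasDerivAt ψ (ψ' t) t)
    (hψ' : ∀ t ∈ Set.Icc (0:ℝ) (1 / Real.sqrt lam),
      HasDerivAt ψ' (-((R t).mulVec (ψ t))) t)
    (h0 : ψ 0 = α) (h0' : ψ' 0 = β) :
    ∀ t ∈ Set.Icc (0:ℝ) (1 / Real.sqrt lam),
      euclNorm (ψ t - α - t • β) ≤ lam * t ^ 2 * euclNorm α + lam * t ^ 3 / 5 * euclNorm β ∧
      euclNorm (ψ' t - β) ≤ 2 * lam * t * euclNorm α + 3 * lam * t ^ 2 / 5 * euclNorm β := by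
  classical
  set T : ℝ := 1 / Real.sqrt lam with hTdef
  -- λ t² ≤ 1 on [0, T]
  have hsl : 0 < Real.sqrt lam := Real.sqrt_pos.2 hlam
  have hT : ∀ t ∈ Set.Icc (0:ℝ) T, lam * t ^ 2 ≤ 1 := by
    intro t ht
    have h1 : t * Real.sqrt lam ≤ 1 := by
      rw [hTdef] at ht
      have := ht.2
      calc t * Real.sqrt lam ≤ (1 / Real.sqrt lam) * Real.sqrt lam := by
            exact mul_le_mul_of_nonneg_right this hsl.le
        _ = 1 := by field_simp
    have hs : Real.sqrt lam * Real.sqrt lam = lam := Real.mul_self_sqrt hlam.le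
    nlinarith [ht.1, hsl.le, mul_nonneg ht.1 hsl.le]
  -- the isometric identification with Euclidean space
  set e : (Fin n → ℝ) ≃L[ℝ] EuclideanSpace ℝ (Fin n) :=
    (EuclideanSpace.equiv (Fin n) ℝ).symm with he
  have hnorm : ∀ v : Fin n → ℝ, euclNorm v = ‖e v‖ := by
    intro v
    simp only [euclNorm, EuclideanSpace.norm_eq, Real.norm_eq_abs, sq_abs]
    rfl
  -- transferred data
  have hΨ : ∀ t ∈ Set.Icc (0:ℝ) T, HasDerivAt (fun s => e (ψ s)) (e (ψ' t)) t := by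
    intro t ht
    exact (e.toContinuousLinearMap.hasFDerivAt.comp_hasDerivAt t (hψ t ht))
  have hΨ' : ∀ t ∈ Set.Icc (0:ℝ) T,
      HasDerivAt (fun s => e (ψ' s)) (-(e ((R t).mulVec (ψ t)))) t := by
    intro t ht
    have := e.toContinuousLinearMap.hasFDerivAt.comp_hasDerivAt t (hψ' t ht)
    simp at this; exact this
  -- continuity of the forcing term
  have hψc : ContinuousOn ψ (Set.Icc (0:ℝ) T) :=
    fun t ht => ((hψ t ht).continuousAt).continuousWithinAt
  have hFc : ContinuousOn (fun t => e ((R t).mulVec (ψ t))) (Set.Icc (0:ℝ) T) := by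
    apply e.continuous.comp_continuousOn
    apply continuousOn_pi.2
    intro i
    have : ∀ t, (R t).mulVec (ψ t) i = ∑ j, R t i j * ψ t j := by
      intro t; simp [Matrix.mulVec, dotProduct]
    simp only [this]
    apply continuousOn_finset_sum
    intro j _
    have hRij : ContinuousOn (fun t => R t i j) (Set.Icc (0:ℝ) T) :=
      (continuousOn_pi.1 ((continuousOn_pi.1 hRcont) i)) j
    have hψj : ContinuousOn (fun t => ψ t j) (Set.Icc (0:ℝ) T) :=
      (continuousOn_pi.1 hψc) j
    exact hRij.mul hψj
  have hF : ∀ t ∈ Set.Icc (0:ℝ) T,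
      ‖e ((R t).mulVec (ψ t))‖ ≤ lam * ‖e (ψ t)‖ := by
    intro t ht
    rw [← hnorm, ← hnorm]
    exact hR t ht (ψ t)
  have main := jacobi_aux lam T hlam hT (fun s => e (ψ s)) (fun s => e (ψ' s))
    (fun t => e ((R t).mulVec (ψ t))) (e α) (e β) hΨ hΨ' hFc hF
    (congrArg e h0) (congrArg e h0')
  intro t ht
  obtain ⟨m1, m2⟩ := main t ht
  have e1 : e (ψ t) - e α - t • e β = e (ψ t - α - t • β) := by
    simp only [map_sub, _root_.map_smul]
  have e2 : e (ψ' t) - e β = e (ψ' t - β) := by simp [map_sub]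
  rw [e1] at m1
  rw [e2] at m2
  simp only [hnorm]
  exact ⟨m1, m2⟩
end

section
/- Let Ψ : [0, ∞) → Matrix (Fin n) (Fin n) ℝ solve Ψ''(t) + R(t)Ψ(t) = 0 with Ψ(0) = A and Ψ'(0) = B, where ‖R(t)‖₂ ≤ λ for all t. Then for 0 ≤ t ≤ 1/√λ: ‖Ψ(t) − A − Bt‖_F ≤ (max_{0≤s≤t} ‖R(s)‖_F) · (t²‖A‖₂ + (t³/5)‖B‖₂). -/
set_option maxHeartbeats 1000000

open Set

namespace JacobiAux


/-- Vectorization of a matrix as an element of Euclidean space. -/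
noncomputable def vecE {n : ℕ} (M : Matrix (Fin n) (Fin n) ℝ) :
    EuclideanSpace ℝ (Fin n × Fin n) :=
  (PiLp.continuousLinearEquiv 2 ℝ (fun _ : Fin n × Fin n => ℝ)).symm (fun p => M p.1 p.2)

lemma vecE_apply {n : ℕ} (M : Matrix (Fin n) (Fin n) ℝ) (p : Fin n × Fin n) :
    vecE M p = M p.1 p.2 := rfl

lemma vecE_add {n : ℕ} (M N : Matrix (Fin n) (Fin n) ℝ) :
    vecE (M + N) = vecE M + vecE N := by
  ext p; simp [vecE_apply]

lemma vecE_sub {n : ℕ} (M N : Matrix (Fin n) (Fin n) ℝ) :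
    vecE (M - N) = vecE M - vecE N := by
  ext p; simp [vecE_apply]

lemma vecE_smul {n : ℕ} (c : ℝ) (M : Matrix (Fin n) (Fin n) ℝ) :
    vecE (c • M) = c • vecE M := by
  ext p; simp [vecE_apply]

lemma vecE_neg {n : ℕ} (M : Matrix (Fin n) (Fin n) ℝ) :
    vecE (-M) = - vecE M := by
  ext p; simp [vecE_apply]

lemma frobNorm_eq_norm {n : ℕ} (M : Matrix (Fin n) (Fin n) ℝ) :
    frobNorm M = ‖vecE M‖ := by
  rw [EuclideanSpace.norm_eq, frobNorm]
  congr 1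
  rw [Fintype.sum_prod_type]
  refine Finset.sum_congr rfl fun i _ => Finset.sum_congr rfl fun j _ => ?_
  rw [Real.norm_eq_abs, sq_abs]; rfl

lemma frobNorm_nonneg {n : ℕ} (M : Matrix (Fin n) (Fin n) ℝ) : 0 ≤ frobNorm M :=
  Real.sqrt_nonneg _

lemma euclNorm_nonneg {n : ℕ} (v : Fin n → ℝ) : 0 ≤ euclNorm v := Real.sqrt_nonneg _

lemma euclNorm_sq {n : ℕ} (v : Fin n → ℝ) : euclNorm v ^ 2 = ∑ i, v i ^ 2 :=
  Real.sq_sqrt (Finset.sum_nonneg fun i _ => sq_nonneg _)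

/-- Cauchy–Schwarz for dot products. -/
lemma dotProduct_le {n : ℕ} (v w : Fin n → ℝ) :
    dotProduct v w ≤ euclNorm v * euclNorm w := by
  have h := Finset.sum_mul_sq_le_sq_mul_sq Finset.univ v w
  have h2 : dotProduct v w ≤ Real.sqrt ((∑ i, v i ^ 2) * ∑ i, w i ^ 2) := by
    have := Real.sqrt_le_sqrt h
    calc dotProduct v w ≤ |∑ i, v i * w i| := le_abs_self _
    _ = Real.sqrt ((∑ i, v i * w i) ^ 2) := (Real.sqrt_sq_eq_abs _).symm
    _ ≤ _ := this
  calc dotProduct v w ≤ _ := h2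
  _ = euclNorm v * euclNorm w := by
      rw [euclNorm, euclNorm, ← Real.sqrt_mul (Finset.sum_nonneg fun i _ => sq_nonneg _)]

/-- Spectral bound transfers to the transpose. -/
lemma transpose_spectral {n : ℕ} {A : Matrix (Fin n) (Fin n) ℝ} {a : ℝ} (ha : 0 ≤ a)
    (hA : ∀ v : Fin n → ℝ, euclNorm (A.mulVec v) ≤ a * euclNorm v) :
    ∀ v : Fin n → ℝ, euclNorm (A.transpose.mulVec v) ≤ a * euclNorm v := by
  intro v
  set w := A.transpose.mulVec v with hw
  have key : euclNorm w ^ 2 ≤ (a * euclNorm v) * euclNorm w := by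
    have h1 : euclNorm w ^ 2 = dotProduct v (A.mulVec w) := by
      rw [euclNorm_sq]
      have : dotProduct w w = ∑ i, w i ^ 2 := by
        simp [dotProduct, sq]
      rw [← this, hw, Matrix.mulVec_transpose, Matrix.dotProduct_mulVec]
    have h2 : dotProduct v (A.mulVec w) ≤ euclNorm v * (a * euclNorm w) :=
      (dotProduct_le v _).trans (by
        have := hA w
        nlinarith [euclNorm_nonneg v])
    nlinarith
  rcases eq_or_lt_of_le (euclNorm_nonneg w) with h | h
  · rw [← h]; exact mul_nonneg ha (euclNorm_nonneg v)
  · nlinarith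



lemma frobNorm_sq {n : ℕ} (M : Matrix (Fin n) (Fin n) ℝ) :
    frobNorm M ^ 2 = ∑ i, ∑ j, M i j ^ 2 :=
  Real.sq_sqrt (Finset.sum_nonneg fun i _ => Finset.sum_nonneg fun j _ => sq_nonneg _)

lemma sqrt_le_of_sq_le {x c : ℝ} (hc : 0 ≤ c) (h : x ≤ c ^ 2) : Real.sqrt x ≤ c :=
  (Real.sqrt_le_sqrt h).trans_eq (Real.sqrt_sq hc)

/-- `‖R ⬝ A‖_F ≤ ‖R‖_F ⋅ ‖A‖₂`. -/
lemma frob_mul_le_right {n : ℕ} (R A : Matrix (Fin n) (Fin n) ℝ) {a : ℝ} (ha : 0 ≤ a)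
    (hA : ∀ v : Fin n → ℝ, euclNorm (A.mulVec v) ≤ a * euclNorm v) :
    frobNorm (R * A) ≤ frobNorm R * a := by
  refine sqrt_le_of_sq_le (mul_nonneg (frobNorm_nonneg R) ha) ?_
  have hrow : ∀ i, ∑ j, (R * A) i j ^ 2 ≤ a ^ 2 * ∑ k, R i k ^ 2 := by
    intro i
    have h1 : ∀ j, (R * A) i j = A.transpose.mulVec (R i) j := by
      intro j
      simp [Matrix.mul_apply, Matrix.mulVec, dotProduct, Matrix.transpose_apply,
        mul_comm]
    calc ∑ j, (R * A) i j ^ 2 = ∑ j, (A.transpose.mulVec (R i)) j ^ 2 := by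
          refine Finset.sum_congr rfl fun j _ => by rw [h1 j]
    _ = euclNorm (A.transpose.mulVec (R i)) ^ 2 := (euclNorm_sq _).symm
    _ ≤ (a * euclNorm (R i)) ^ 2 := by
          have := transpose_spectral ha hA (R i)
          have h0 := euclNorm_nonneg (A.transpose.mulVec (R i))
          nlinarith
    _ = a ^ 2 * ∑ k, R i k ^ 2 := by rw [mul_pow, euclNorm_sq]
  calc ∑ i, ∑ j, (R * A) i j ^ 2 ≤ ∑ i, a ^ 2 * ∑ k, R i k ^ 2 :=
        Finset.sum_le_sum fun i _ => hrow i
  _ = (frobNorm R * a) ^ 2 := by rw [← Finset.mul_sum, mul_pow, frobNorm_sq]; ring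

/-- `‖R ⬝ M‖_F ≤ ‖R‖₂ ⋅ ‖M‖_F`. -/
lemma frob_mul_le_left {n : ℕ} (R M : Matrix (Fin n) (Fin n) ℝ) {lam : ℝ} (hlam : 0 ≤ lam)
    (hR : ∀ v : Fin n → ℝ, euclNorm (R.mulVec v) ≤ lam * euclNorm v) :
    frobNorm (R * M) ≤ lam * frobNorm M := by
  refine sqrt_le_of_sq_le (mul_nonneg hlam (frobNorm_nonneg M)) ?_
  have hcol : ∀ j, ∑ i, (R * M) i j ^ 2 ≤ lam ^ 2 * ∑ i, M i j ^ 2 := by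
    intro j
    have h1 : ∀ i, (R * M) i j = R.mulVec (fun k => M k j) i := by
      intro i
      simp [Matrix.mul_apply, Matrix.mulVec, dotProduct]
    calc ∑ i, (R * M) i j ^ 2 = ∑ i, (R.mulVec (fun k => M k j)) i ^ 2 := by
          refine Finset.sum_congr rfl fun i _ => by rw [h1 i]
    _ = euclNorm (R.mulVec (fun k => M k j)) ^ 2 := (euclNorm_sq _).symm
    _ ≤ (lam * euclNorm (fun k => M k j)) ^ 2 := by
          have := hR (fun k => M k j)
          have h0 := euclNorm_nonneg (R.mulVec (fun k => M k j))
          nlinarith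
    _ = lam ^ 2 * ∑ i, M i j ^ 2 := by rw [mul_pow, euclNorm_sq]
  calc ∑ i, ∑ j, (R * M) i j ^ 2 = ∑ j, ∑ i, (R * M) i j ^ 2 := Finset.sum_comm ..
  _ ≤ ∑ j, lam ^ 2 * ∑ i, M i j ^ 2 := Finset.sum_le_sum fun j _ => hcol j
  _ = lam ^ 2 * ∑ j, ∑ i, M i j ^ 2 := by rw [← Finset.mul_sum]
  _ = (lam * frobNorm M) ^ 2 := by rw [mul_pow, frobNorm_sq]; rw [Finset.sum_comm]



/-- Second-order comparison: if `‖w''(u)‖ ≤ c(u) + λ‖w(u)‖`, `w(0) = w'(0) = 0`, and `φ`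
is a strict supersolution of the comparison ODE with `φ(0) = φ'(0) = 0`, then `‖w‖ ≤ φ`. -/
lemma second_order_comp {F : Type*} [NormedAddCommGroup F] [NormedSpace ℝ F]
    {t lam ε : ℝ} (hε : 0 < ε) (hlam : 0 ≤ lam)
    {w w' w'' : ℝ → F} {c φ φ' φ'' : ℝ → ℝ}
    (hw : ∀ u ∈ Icc (0:ℝ) t, HasDerivAt w (w' u) u)
    (hw' : ∀ u ∈ Icc (0:ℝ) t, HasDerivAt w' (w'' u) u)
    (hw2c : ContinuousOn (fun u => ‖w'' u‖) (Icc (0:ℝ) t))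
    (w0 : w 0 = 0) (w0' : w' 0 = 0)
    (hφ : ∀ x, HasDerivAt φ (φ' x) x) (hφ' : ∀ x, HasDerivAt φ' (φ'' x) x)
    (hφ2c : Continuous φ'') (φ0 : φ 0 = 0) (φ0' : φ' 0 = 0)
    (key : ∀ u ∈ Icc (0:ℝ) t, ‖w'' u‖ ≤ c u + lam * ‖w u‖)
    (super : ∀ u ∈ Icc (0:ℝ) t, c u + lam * φ u + ε ≤ φ'' u) :
    ∀ u ∈ Icc (0:ℝ) t, ‖w u‖ ≤ φ u := by
  rcases le_or_gt t 0 with ht0 | ht0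
  · intro u hu
    have hu0 : u = 0 := le_antisymm (hu.2.trans ht0) hu.1
    simp [hu0, w0, φ0]
  -- continuity of w and w'
  have hwc : ContinuousOn w (Icc (0:ℝ) t) :=
    fun u hu => (hw u hu).continuousAt.continuousWithinAt
  have hw'c : ContinuousOn w' (Icc (0:ℝ) t) :=
    fun u hu => (hw' u hu).continuousAt.continuousWithinAt
  have hφ'c : Continuous φ' := by
    rw [continuous_iff_continuousAt]; exact fun x => (hφ' x).continuousAt
  -- the set where `‖w'‖ ≤ φ'` holds up to u
  set S : Set ℝ := {u | u ∈ Icc (0:ℝ) t ∧ ∀ v ∈ Icc (0:ℝ) u, ‖w' v‖ ≤ φ' v} with hS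
  have h0S : (0:ℝ) ∈ S := by
    refine ⟨⟨le_refl _, ht0.le⟩, fun v hv => ?_⟩
    have : v = 0 := le_antisymm hv.2 hv.1
    simp [this, w0', φ0']
  have hSbdd : BddAbove S := ⟨t, fun u hu => hu.1.2⟩
  -- from membership in S, deduce the bound on ‖w‖
  have stepA : ∀ τ, τ ∈ S → ∀ u ∈ Icc (0:ℝ) τ, ‖w u‖ ≤ φ u := by
    intro τ hτ
    have hsub : Icc (0:ℝ) τ ⊆ Icc (0:ℝ) t := Icc_subset_Icc le_rfl hτ.1.2
    have := image_norm_le_of_norm_deriv_right_le_deriv_boundary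
      (f := w) (f' := w') (a := 0) (b := τ)
      (hwc.mono hsub)
      (fun x hx => (hw x (hsub (Ico_subset_Icc_self hx))).hasDerivWithinAt)
      (B := φ) (B' := φ') (by simp [w0, φ0]) hφ
      (fun x hx => hτ.2 x (Ico_subset_Icc_self hx))
    exact fun u hu => this hu
  set τ := sSup S with hτdef
  have hτ0 : 0 ≤ τ := le_csSup hSbdd h0S
  have hτt : τ ≤ t := csSup_le ⟨0, h0S⟩ fun u hu => hu.1.2
  have hτmem : τ ∈ Icc (0:ℝ) t := ⟨hτ0, hτt⟩
  -- τ ∈ S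
  have hIco : ∀ x ∈ Ico (0:ℝ) τ, ‖w' x‖ ≤ φ' x := by
    intro x hx
    obtain ⟨u, huS, hxu⟩ := exists_lt_of_lt_csSup ⟨0, h0S⟩ hx.2
    exact huS.2 x ⟨hx.1, hxu.le⟩
  have hτpt : ‖w' τ‖ ≤ φ' τ := by
    rcases eq_or_lt_of_le hτ0 with h0τ | h0τ
    · simp [← h0τ, w0', φ0']
    · have hcont : ContinuousWithinAt (fun x => ‖w' x‖ - φ' x) (Icc (0:ℝ) t) τ :=
        ((hw'c.norm.sub hφ'c.continuousOn) τ hτmem)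
      have htend : Filter.Tendsto (fun x => ‖w' x‖ - φ' x) (nhdsWithin τ (Ico (0:ℝ) τ))
          (nhds (‖w' τ‖ - φ' τ)) :=
        hcont.mono_left
          (nhdsWithin_mono τ (Ico_subset_Icc_self.trans (Icc_subset_Icc le_rfl hτt)))
      haveI : (nhdsWithin τ (Ico (0:ℝ) τ)).NeBot := by
        refine mem_closure_iff_nhdsWithin_neBot.mp ?_
        rw [closure_Ico (ne_of_lt h0τ)]
        exact ⟨hτ0, le_rfl⟩
      have hev : ∀ᶠ x in nhdsWithin τ (Ico (0:ℝ) τ), ‖w' x‖ - φ' x ≤ 0 :=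
        Filter.eventually_of_mem self_mem_nhdsWithin (fun x hx => by linarith [hIco x hx])
      have := le_of_tendsto htend hev
      linarith
  have hτS : τ ∈ S := by
    refine ⟨hτmem, fun v hv => ?_⟩
    rcases eq_or_lt_of_le hv.2 with hvτ | hvτ
    · exact hvτ ▸ hτpt
    · exact hIco v ⟨hv.1, hvτ⟩
  -- show τ = t
  have hτeq : τ = t := by
    by_contra hne
    have hτlt : τ < t := lt_of_le_of_ne hτt hne
    have hwφ : ∀ u ∈ Icc (0:ℝ) τ, ‖w u‖ ≤ φ u := stepA τ hτS
    -- m < 0 near τ within Icc 0 t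
    set m : ℝ → ℝ := fun u => ‖w'' u‖ - φ'' u with hm
    have hmτ : m τ ≤ -ε := by
      have h1 := key τ hτmem
      have h2 := super τ hτmem
      have h3 := hwφ τ ⟨hτ0, le_rfl⟩
      have : lam * ‖w τ‖ ≤ lam * φ τ := mul_le_mul_of_nonneg_left h3 hlam
      simp only [hm]; linarith
    have hmcont : ContinuousWithinAt m (Icc (0:ℝ) t) τ :=
      ((hw2c.sub hφ2c.continuousOn) τ hτmem)
    have hev : ∀ᶠ x in nhdsWithin τ (Icc (0:ℝ) t), m x < 0 :=
      hmcont (Iio_mem_nhds (lt_of_le_of_lt hmτ (by linarith)))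
    rw [Filter.eventually_iff, Metric.mem_nhdsWithin_iff] at hev
    obtain ⟨δ, hδ0, hδ⟩ := hev
    set τ' := min t (τ + δ / 2) with hτ'
    have hττ' : τ < τ' := lt_min hτlt (by linarith)
    have hτ't : τ' ≤ t := min_le_left _ _
    have hτ'0 : 0 ≤ τ' := hτ0.trans hττ'.le
    -- bound ‖w''‖ ≤ φ'' on Ico 0 τ'
    have hbd : ∀ x ∈ Ico (0:ℝ) τ', ‖w'' x‖ ≤ φ'' x := by
      intro x hx
      have hxt : x ∈ Icc (0:ℝ) t := ⟨hx.1, hx.2.le.trans hτ't⟩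
      rcases le_or_gt x τ with hxτ | hxτ
      · have h1 := key x hxt
        have h2 := super x hxt
        have h3 := hwφ x ⟨hx.1, hxτ⟩
        have : lam * ‖w x‖ ≤ lam * φ x := mul_le_mul_of_nonneg_left h3 hlam
        linarith
      · have hd : dist x τ < δ := by
          rw [Real.dist_eq, abs_of_pos (by linarith)]
          have : x < τ + δ / 2 := lt_of_lt_of_le hx.2 (min_le_right _ _)
          linarith
        have := hδ ⟨Metric.mem_ball.mpr hd, hxt⟩
        simp only [mem_setOf_eq, hm] at this; linarith
    -- comparison for w' on [0, τ']
    have hsub' : Icc (0:ℝ) τ' ⊆ Icc (0:ℝ) t := Icc_subset_Icc le_rfl hτ't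
    have hw'le : ∀ v ∈ Icc (0:ℝ) τ', ‖w' v‖ ≤ φ' v := by
      have := image_norm_le_of_norm_deriv_right_le_deriv_boundary
        (f := w') (f' := w'') (a := 0) (b := τ')
        (hw'c.mono hsub')
        (fun x hx => (hw' x (hsub' (Ico_subset_Icc_self hx))).hasDerivWithinAt)
        (B := φ') (B' := φ'') (by simp [w0', φ0']) hφ' hbd
      exact fun v hv => this hv
    have : τ' ∈ S := ⟨⟨hτ'0, hτ't⟩, hw'le⟩
    have : τ' ≤ τ := le_csSup hSbdd this
    linarith
  exact hτeq ▸ stepA τ hτS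

lemma hasDerivAt_vecE {n : ℕ} {F : ℝ → Matrix (Fin n) (Fin n) ℝ}
    {G : Matrix (Fin n) (Fin n) ℝ} {u : ℝ}
    (h : ∀ i j, HasDerivAt (fun s => F s i j) (G i j) u) :
    HasDerivAt (fun s => vecE (F s)) (vecE G) u := by
  have hpi : HasDerivAt (fun s => (fun p : Fin n × Fin n => F s p.1 p.2))
      (fun p : Fin n × Fin n => G p.1 p.2) u :=
    hasDerivAt_pi.mpr fun p => h p.1 p.2
  exact ((PiLp.continuousLinearEquiv 2 ℝ
    (fun _ : Fin n × Fin n => ℝ)).symm.toContinuousLinearMap).hasFDerivAt.comp_hasDerivAt u hpi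

lemma continuous_vecE {n : ℕ} : Continuous (vecE (n := n)) := by
  refine Continuous.comp (PiLp.continuousLinearEquiv 2 ℝ
    (fun _ : Fin n × Fin n => ℝ)).symm.continuous ?_
  exact continuous_pi fun p => (continuous_apply p.2).comp (continuous_apply p.1)

lemma hasDerivAt_poly7 (c1 c2 c3 c4 c5 c6 c7 : ℝ) (x : ℝ) :
    HasDerivAt (fun u : ℝ => c1 * u + c2 * u^2 + c3 * u^3 + c4 * u^4 + c5 * u^5
        + c6 * u^6 + c7 * u^7)
      (c1 + 2*c2*x + 3*c3*x^2 + 4*c4*x^3 + 5*c5*x^4 + 6*c6*x^5 + 7*c7*x^6) x := by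
  have h :=
    (((((((hasDerivAt_id x).const_mul c1).add ((hasDerivAt_pow 2 x).const_mul c2)).add
      ((hasDerivAt_pow 3 x).const_mul c3)).add ((hasDerivAt_pow 4 x).const_mul c4)).add
      ((hasDerivAt_pow 5 x).const_mul c5)).add ((hasDerivAt_pow 6 x).const_mul c6)).add
      ((hasDerivAt_pow 7 x).const_mul c7)
  refine h.congr_deriv ?_
  push_cast; ring


lemma frob_add_le {n : ℕ} (X Y : Matrix (Fin n) (Fin n) ℝ) :
    frobNorm (X + Y) ≤ frobNorm X + frobNorm Y := by
  rw [frobNorm_eq_norm, frobNorm_eq_norm, frobNorm_eq_norm, vecE_add]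
  exact norm_add_le _ _

lemma frob_smul {n : ℕ} (c : ℝ) (X : Matrix (Fin n) (Fin n) ℝ) :
    frobNorm (c • X) = |c| * frobNorm X := by
  rw [frobNorm_eq_norm, frobNorm_eq_norm, vecE_smul, norm_smul, Real.norm_eq_abs]


end JacobiAux

open JacobiAux Set

/-- Matrix version of the approximate linearity of Jacobi fields: if
`Ψ'' + R(t)Ψ = 0`, `Ψ(0) = A`, `Ψ'(0) = B`, with `‖R(t)‖₂ ≤ λ`, then for
`0 ≤ t ≤ 1/√λ`,
`‖Ψ(t) − A − Bt‖_F ≤ (max_{0≤s≤t} ‖R(s)‖_F)(t²‖A‖₂ + (t³/5)‖B‖₂)`. -/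
theorem jacobi_ode_linear_approx_matrix {n : ℕ} (lam : ℝ) (hlam : 0 < lam)
    (R : ℝ → Matrix (Fin n) (Fin n) ℝ)
    (hRcont : ContinuousOn R (Set.Icc (0:ℝ) (1 / Real.sqrt lam)))
    (hR : ∀ t ∈ Set.Icc (0:ℝ) (1 / Real.sqrt lam), ∀ v : Fin n → ℝ,
      euclNorm ((R t).mulVec v) ≤ lam * euclNorm v)
    (Ψ Ψ' : ℝ → Matrix (Fin n) (Fin n) ℝ) (A B : Matrix (Fin n) (Fin n) ℝ)
    (hΨ : ∀ t ∈ Set.Icc (0:ℝ) (1 / Real.sqrt lam), ∀ i j,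
      HasDerivAt (fun s => Ψ s i j) (Ψ' t i j) t)
    (hΨ' : ∀ t ∈ Set.Icc (0:ℝ) (1 / Real.sqrt lam), ∀ i j,
      HasDerivAt (fun s => Ψ' s i j) ((-(R t * Ψ t)) i j) t)
    (h0 : Ψ 0 = A) (h0' : Ψ' 0 = B)
    (a b : ℝ) (ha0 : 0 ≤ a) (hb0 : 0 ≤ b)
    (hA : ∀ v : Fin n → ℝ, euclNorm (A.mulVec v) ≤ a * euclNorm v)
    (hB : ∀ v : Fin n → ℝ, euclNorm (B.mulVec v) ≤ b * euclNorm v) :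
    ∀ t ∈ Set.Icc (0:ℝ) (1 / Real.sqrt lam), ∀ MF : ℝ,
      (∀ s ∈ Set.Icc (0:ℝ) t, frobNorm (R s) ≤ MF) →
      frobNorm (Ψ t - A - t • B) ≤ MF * (t ^ 2 * a + t ^ 3 / 5 * b) := by
  intro t ht MF hMF
  obtain ⟨ht0, htT⟩ := ht
  have hsqlam : 0 < Real.sqrt lam := Real.sqrt_pos.mpr hlam
  have hsub : Icc (0:ℝ) t ⊆ Icc 0 (1 / Real.sqrt lam) := Icc_subset_Icc le_rfl htT
  have hMF0 : 0 ≤ MF := (frobNorm_nonneg (R 0)).trans (hMF 0 ⟨le_rfl, ht0⟩)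
  have hlt2 : lam * t ^ 2 ≤ 1 := by
    have h1 : t * Real.sqrt lam ≤ 1 := by
      rw [le_div_iff₀ hsqlam] at htT; linarith
    have h2 : 0 ≤ t * Real.sqrt lam := mul_nonneg ht0 hsqlam.le
    have h4 : (t * Real.sqrt lam) ^ 2 = lam * t ^ 2 := by
      rw [mul_pow, Real.sq_sqrt hlam.le]; ring
    nlinarith
  -- vectorized functions
  set wf : ℝ → EuclideanSpace ℝ (Fin n × Fin n) :=
    fun u => vecE (Ψ u) - vecE A - u • vecE B with hwf
  set wg : ℝ → EuclideanSpace ℝ (Fin n × Fin n) :=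
    fun u => vecE (Ψ' u) - vecE B with hwg
  set wh : ℝ → EuclideanSpace ℝ (Fin n × Fin n) :=
    fun u => -vecE (R u * Ψ u) with hwh
  have hw : ∀ u ∈ Icc (0:ℝ) t, HasDerivAt wf (wg u) u := by
    intro u hu
    have h1 : HasDerivAt (fun s => vecE (Ψ s)) (vecE (Ψ' u)) u :=
      hasDerivAt_vecE (fun i j => hΨ u (hsub hu) i j)
    have h2 : HasDerivAt (fun s : ℝ => s • vecE B) ((1:ℝ) • vecE B) u :=
      (hasDerivAt_id u).smul_const (vecE B)
    have h3 := (h1.sub_const (vecE A)).sub h2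
    simp only [one_smul] at h3
    exact h3
  have hw' : ∀ u ∈ Icc (0:ℝ) t, HasDerivAt wg (wh u) u := by
    intro u hu
    have h1 : HasDerivAt (fun s => vecE (Ψ' s)) (vecE (-(R u * Ψ u))) u :=
      hasDerivAt_vecE (fun i j => hΨ' u (hsub hu) i j)
    have h2 : vecE (-(R u * Ψ u)) = wh u := by rw [vecE_neg]
    simpa [hwg, h2] using h1.sub_const (vecE B)
  have hwf0 : wf 0 = 0 := by simp [hwf, h0]
  have hwg0 : wg 0 = 0 := by simp [hwg, h0']
  have hDu : ∀ u : ℝ, ‖wf u‖ = frobNorm (Ψ u - A - u • B) := by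
    intro u
    rw [frobNorm_eq_norm, vecE_sub, vecE_sub, vecE_smul]
  -- key differential inequality
  have key : ∀ u ∈ Icc (0:ℝ) t, ‖wh u‖ ≤ (MF * a + MF * b * u) + lam * ‖wf u‖ := by
    intro u hu
    have hu0 : 0 ≤ u := hu.1
    have hRu := hR u (hsub hu)
    have hsplit : R u * Ψ u = (R u * A + u • (R u * B)) + R u * (Ψ u - A - u • B) := by
      rw [← Matrix.mul_smul, ← Matrix.mul_add, ← Matrix.mul_add]
      congr 1
      abel
    have h1 : frobNorm (R u * A) ≤ MF * a :=
      (frob_mul_le_right (R u) A ha0 hA).trans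
        (mul_le_mul_of_nonneg_right (hMF u hu) ha0)
    have h2 : frobNorm (R u * B) ≤ MF * b :=
      (frob_mul_le_right (R u) B hb0 hB).trans
        (mul_le_mul_of_nonneg_right (hMF u hu) hb0)
    have h3 : frobNorm (R u * (Ψ u - A - u • B)) ≤ lam * ‖wf u‖ := by
      rw [hDu u]
      exact frob_mul_le_left (R u) _ hlam.le hRu
    have h4 : frobNorm (u • (R u * B)) ≤ u * (MF * b) := by
      rw [frob_smul, abs_of_nonneg hu0]
      exact mul_le_mul_of_nonneg_left h2 hu0
    have h5 : ‖wh u‖ = frobNorm (R u * Ψ u) := by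
      rw [hwh, frobNorm_eq_norm]; exact norm_neg _
    calc ‖wh u‖ = frobNorm ((R u * A + u • (R u * B)) + R u * (Ψ u - A - u • B)) := by
          rw [h5, hsplit]
    _ ≤ frobNorm (R u * A + u • (R u * B)) + frobNorm (R u * (Ψ u - A - u • B)) :=
          frob_add_le _ _
    _ ≤ (frobNorm (R u * A) + frobNorm (u • (R u * B))) + lam * ‖wf u‖ :=
          add_le_add (frob_add_le _ _) h3
    _ ≤ (MF * a + MF * b * u) + lam * ‖wf u‖ := by
          have := add_le_add (add_le_add h1 h4) (le_refl (lam * ‖wf u‖))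
          linarith
  -- continuity of ‖wh‖
  have hw2c : ContinuousOn (fun u => ‖wh u‖) (Icc (0:ℝ) t) := by
    have hRent : ∀ i k, ContinuousOn (fun u => R u i k) (Icc (0:ℝ) t) := fun i k =>
      (continuous_id.matrix_elem i k).comp_continuousOn (hRcont.mono hsub)
    have hΨent : ∀ i j, ContinuousOn (fun u => Ψ u i j) (Icc (0:ℝ) t) := fun i j u hu =>
      ((hΨ u (hsub hu) i j).continuousAt).continuousWithinAt
    have hmul : ∀ p : Fin n × Fin n, ContinuousOn (fun u => (R u * Ψ u) p.1 p.2)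
        (Icc (0:ℝ) t) := by
      intro p
      simp only [Matrix.mul_apply]
      exact continuousOn_finset_sum _ fun k _ => (hRent p.1 k).mul (hΨent k p.2)
    have hp : ContinuousOn (fun u => (fun p : Fin n × Fin n => (R u * Ψ u) p.1 p.2))
        (Icc (0:ℝ) t) := continuousOn_pi.mpr hmul
    have hvec : ContinuousOn (fun u => vecE (R u * Ψ u)) (Icc (0:ℝ) t) :=
      ((PiLp.continuousLinearEquiv 2 ℝ
        (fun _ : Fin n × Fin n => ℝ)).symm.continuous).comp_continuousOn hp
    simpa [hwh] using hvec.neg.norm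
  -- the ε-comparison
  have main : ∀ ε : ℝ, 0 < ε → ‖wf t‖ ≤
      (MF * a + ε) * (t ^ 2 / 2 + lam * t ^ 4 / 24 + lam ^ 2 * t ^ 6 / 360)
        + MF * b * (t ^ 3 / 6 + lam * t ^ 5 / 120 + lam ^ 2 * t ^ 7 / 2520) := by
    intro ε hε
    obtain ⟨P, hPd⟩ : ∃ x : ℝ, x = MF * a + ε := ⟨_, rfl⟩
    obtain ⟨Q, hQd⟩ : ∃ x : ℝ, x = MF * b := ⟨_, rfl⟩
    have hP0 : 0 ≤ P := by rw [hPd]; nlinarith [mul_nonneg hMF0 ha0]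
    have hQ0 : 0 ≤ Q := by rw [hQd]; exact mul_nonneg hMF0 hb0
    set φ : ℝ → ℝ := fun u => 0 * u + P/2 * u^2 + Q/6 * u^3 + lam*P/24 * u^4
      + lam*Q/120 * u^5 + lam^2*P/360 * u^6 + lam^2*Q/2520 * u^7 with hφd
    set φ' : ℝ → ℝ := fun u => P * u + Q/2 * u^2 + lam*P/6 * u^3 + lam*Q/24 * u^4
      + lam^2*P/60 * u^5 + lam^2*Q/360 * u^6 + 0 * u^7 with hφ'd
    set φ'' : ℝ → ℝ := fun u => P + Q * u + lam*P/2 * u^2 + lam*Q/6 * u^3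
      + lam^2*P/12 * u^4 + lam^2*Q/60 * u^5 with hφ''d
    have hφder : ∀ x, HasDerivAt φ (φ' x) x := by
      intro x
      have h := hasDerivAt_poly7 0 (P/2) (Q/6) (lam*P/24) (lam*Q/120) (lam^2*P/360)
        (lam^2*Q/2520) x
      have he : 0 + 2*(P/2)*x + 3*(Q/6)*x^2 + 4*(lam*P/24)*x^3 + 5*(lam*Q/120)*x^4
          + 6*(lam^2*P/360)*x^5 + 7*(lam^2*Q/2520)*x^6 = φ' x := by
        rw [hφ'd]; ring
      rw [he] at h
      exact h
    have hφ'der : ∀ x, HasDerivAt φ' (φ'' x) x := by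
      intro x
      have h := hasDerivAt_poly7 P (Q/2) (lam*P/6) (lam*Q/24) (lam^2*P/60) (lam^2*Q/360)
        0 x
      have he : P + 2*(Q/2)*x + 3*(lam*P/6)*x^2 + 4*(lam*Q/24)*x^3 + 5*(lam^2*P/60)*x^4
          + 6*(lam^2*Q/360)*x^5 + 7*0*x^6 = φ'' x := by
        rw [hφ''d]; ring
      rw [he] at h
      exact h
    have hφ2c : Continuous φ'' := by
      rw [hφ''d]; fun_prop
    have hφ0 : φ 0 = 0 := by simp [hφd]
    have hφ0' : φ' 0 = 0 := by simp [hφ'd]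
    have super : ∀ u ∈ Icc (0:ℝ) t, (MF * a + MF * b * u) + lam * φ u + ε ≤ φ'' u := by
      intro u hu
      have hu0 : 0 ≤ u := hu.1
      have hsq : u ^ 2 ≤ t ^ 2 := by nlinarith [hu.2]
      have hu2 : lam * u ^ 2 ≤ 1 :=
        le_trans (mul_le_mul_of_nonneg_left hsq hlam.le) hlt2
      have e1 : lam^3 * P * u^6 ≤ lam^2 * P * u^4 := by
        nlinarith [mul_nonneg (mul_nonneg (mul_nonneg (sq_nonneg lam) hP0)
          (pow_nonneg hu0 4)) (sub_nonneg.mpr hu2)]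
      have e2 : lam^3 * Q * u^7 ≤ lam^2 * Q * u^5 := by
        nlinarith [mul_nonneg (mul_nonneg (mul_nonneg (sq_nonneg lam) hQ0)
          (pow_nonneg hu0 5)) (sub_nonneg.mpr hu2)]
      have p1 : 0 ≤ lam^2 * P * u^4 := by positivity
      have p2 : 0 ≤ lam^2 * Q * u^5 := by positivity
      have hPQ : MF * a + MF * b * u + ε = P + Q * u := by rw [hPd, hQd]; ring
      simp only [hφd, hφ''d]
      nlinarith [e1, e2, p1, p2, hPQ]
    have hcomp := second_order_comp (t := t) (lam := lam) (ε := ε)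
      (c := fun u => MF * a + MF * b * u) hε hlam.le
      hw hw' hw2c hwf0 hwg0 hφder hφ'der hφ2c hφ0 hφ0' key super
    have hend := hcomp t ⟨ht0, le_rfl⟩
    calc ‖wf t‖ ≤ φ t := hend
    _ = (MF * a + ε) * (t ^ 2 / 2 + lam * t ^ 4 / 24 + lam ^ 2 * t ^ 6 / 360)
        + MF * b * (t ^ 3 / 6 + lam * t ^ 5 / 120 + lam ^ 2 * t ^ 7 / 2520) := by
      simp only [hφd, hPd, hQd]; ring
  -- remove ε
  have hC2 : (0:ℝ) ≤ t ^ 2 / 2 + lam * t ^ 4 / 24 + lam ^ 2 * t ^ 6 / 360 := by positivity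
  have hfinal : ‖wf t‖ ≤
      MF * a * (t ^ 2 / 2 + lam * t ^ 4 / 24 + lam ^ 2 * t ^ 6 / 360)
        + MF * b * (t ^ 3 / 6 + lam * t ^ 5 / 120 + lam ^ 2 * t ^ 7 / 2520) := by
    by_contra hcon
    push_neg at hcon
    set C2 := t ^ 2 / 2 + lam * t ^ 4 / 24 + lam ^ 2 * t ^ 6 / 360 with hC2d
    set C3 := t ^ 3 / 6 + lam * t ^ 5 / 120 + lam ^ 2 * t ^ 7 / 2520 with hC3d
    set d := ‖wf t‖ - (MF * a * C2 + MF * b * C3) with hdd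
    have hd0 : 0 < d := by rw [hdd]; linarith
    have hε0 : 0 < d / (C2 + 1) := by positivity
    have h := main (d / (C2 + 1)) hε0
    have hkey : d / (C2 + 1) * C2 < d := by
      rw [div_mul_eq_mul_div, div_lt_iff₀ (by linarith)]
      nlinarith
    rw [hdd] at hkey
    nlinarith [h]
  -- conclude
  have k1 : lam * t ^ 4 ≤ t ^ 2 := by
    nlinarith [mul_nonneg (sub_nonneg.mpr hlt2) (sq_nonneg t)]
  have k2 : lam ^ 2 * t ^ 6 ≤ t ^ 2 := by
    nlinarith [mul_nonneg (sub_nonneg.mpr hlt2) (mul_nonneg hlam.le (pow_nonneg ht0 4))]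
  have k3 : lam * t ^ 5 ≤ t ^ 3 := by
    nlinarith [mul_nonneg (sub_nonneg.mpr hlt2) (pow_nonneg ht0 3)]
  have k4 : lam ^ 2 * t ^ 7 ≤ t ^ 3 := by
    nlinarith [mul_nonneg (sub_nonneg.mpr hlt2) (mul_nonneg hlam.le (pow_nonneg ht0 5))]
  have c2le : t ^ 2 / 2 + lam * t ^ 4 / 24 + lam ^ 2 * t ^ 6 / 360 ≤ t ^ 2 := by
    nlinarith [k1, k2, sq_nonneg t]
  have c3le : t ^ 3 / 6 + lam * t ^ 5 / 120 + lam ^ 2 * t ^ 7 / 2520 ≤ t ^ 3 / 5 := by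
    nlinarith [k3, k4, pow_nonneg ht0 3]
  have m1 := mul_le_mul_of_nonneg_left c2le (mul_nonneg hMF0 ha0)
  have m2 := mul_le_mul_of_nonneg_left c3le (mul_nonneg hMF0 hb0)
  have : frobNorm (Ψ t - A - t • B) = ‖wf t‖ := (hDu t).symm
  rw [this]
  calc ‖wf t‖ ≤ _ := hfinal
  _ ≤ MF * (t ^ 2 * a + t ^ 3 / 5 * b) := by nlinarith [m1, m2]
end

section
/- For the logarithmic barrier φ(x) = −∑ᵢ log(aᵢᵀx − bᵢ) on the polytope {Ax > b}, the drift μ(x) = (1/2)∑ⱼ ∂/∂xⱼ((∇²φ(x))⁻¹)_{ij} equals (A_xᵀA_x)⁻¹ A_xᵀ σ_x, where A_x = diag(Ax−b)⁻¹A and σ_x is the vector of leverage scores (diagonal of A_x(A_xᵀA_x)⁻¹A_xᵀ). Moreover ‖μ(x)‖²_x = μ(x)ᵀ(∇²φ(x))μ(x) ≤ n. -/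
/-- Slack vector `s_x = Ax − b`. -/
noncomputable def slack {m n : ℕ} (A : Matrix (Fin m) (Fin n) ℝ) (b : Fin m → ℝ)
    (x : Fin n → ℝ) : Fin m → ℝ :=
  fun i => A.mulVec x i - b i

/-- Rescaled matrix `A_x = S_x⁻¹ A`. -/
noncomputable def Ascaled {m n : ℕ} (A : Matrix (Fin m) (Fin n) ℝ) (b : Fin m → ℝ)
    (x : Fin n → ℝ) : Matrix (Fin m) (Fin n) ℝ :=
  Matrix.of fun i j => A i j / slack A b x i

/-- The log-barrier Hessian `∇²φ(x) = A_xᵀ A_x`. -/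
noncomputable def gmat {m n : ℕ} (A : Matrix (Fin m) (Fin n) ℝ) (b : Fin m → ℝ)
    (x : Fin n → ℝ) : Matrix (Fin n) (Fin n) ℝ :=
  (Ascaled A b x).transpose * Ascaled A b x

/-- Leverage scores: the diagonal of `A_x (A_xᵀ A_x)⁻¹ A_xᵀ`. -/
noncomputable def levScore {m n : ℕ} (A : Matrix (Fin m) (Fin n) ℝ) (b : Fin m → ℝ)
    (x : Fin n → ℝ) : Fin m → ℝ :=
  fun i => (Ascaled A b x * (gmat A b x)⁻¹ * (Ascaled A b x).transpose) i i

/-! ### Auxiliary lemmas -/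

lemma slack_ne {m n : ℕ} {A : Matrix (Fin m) (Fin n) ℝ} {b : Fin m → ℝ}
    {x : Fin n → ℝ} (hx : ∀ i, b i < A.mulVec x i) (i : Fin m) : slack A b x i ≠ 0 :=
  ne_of_gt (by simpa [slack] using sub_pos.mpr (hx i))

lemma Ascaled_eq {m n : ℕ} (A : Matrix (Fin m) (Fin n) ℝ) (b : Fin m → ℝ)
    (x : Fin n → ℝ) :
    Ascaled A b x = Matrix.diagonal (fun i => (slack A b x i)⁻¹) * A := by
  ext i j
  simp [Ascaled, Matrix.diagonal_mul, div_eq_inv_mul]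

lemma gmat_isUnit {m n : ℕ} {A : Matrix (Fin m) (Fin n) ℝ} {b : Fin m → ℝ}
    {x : Fin n → ℝ} (hrank : A.rank = n) (hx : ∀ i, b i < A.mulVec x i) :
    IsUnit (gmat A b x) := by
  have hds : IsUnit (Matrix.diagonal (fun i => (slack A b x i)⁻¹)).det := by
    rw [Matrix.det_diagonal]
    exact isUnit_iff_ne_zero.mpr (Finset.prod_ne_zero_iff.mpr fun i _ =>
      inv_ne_zero (slack_ne hx i))
  have hAr : (Ascaled A b x).rank = n := by
    rw [Ascaled_eq, Matrix.rank_mul_eq_right_of_isUnit_det _ _ hds, hrank]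
  have hgr : (gmat A b x).rank = n := by
    rw [gmat, Matrix.rank_transpose_mul_self, hAr]
  rw [← Matrix.mulVec_surjective_iff_isUnit]
  have : LinearMap.range (gmat A b x).mulVecLin = ⊤ := by
    apply Submodule.eq_top_of_finrank_eq
    rw [← Matrix.rank, hgr]
    simp
  intro v
  have hv : v ∈ LinearMap.range (gmat A b x).mulVecLin := this ▸ Submodule.mem_top
  exact hv

section proj
variable {m n : ℕ} {A : Matrix (Fin m) (Fin n) ℝ} {b : Fin m → ℝ} {x : Fin n → ℝ}
  (hrank : A.rank = n) (hx : ∀ i, b i < A.mulVec x i)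
include hrank hx
set_option linter.unusedSectionVars false

lemma gmat_det_isUnit : IsUnit (gmat A b x).det :=
  Matrix.isUnit_iff_isUnit_det _ |>.mp (gmat_isUnit hrank hx)

lemma proj_symm :
    (Ascaled A b x * (gmat A b x)⁻¹ * (Ascaled A b x).transpose).transpose
      = Ascaled A b x * (gmat A b x)⁻¹ * (Ascaled A b x).transpose := by
  have h1 : (gmat A b x).transpose = gmat A b x := by
    simp [gmat, Matrix.transpose_mul]
  simp [Matrix.transpose_mul, Matrix.transpose_nonsing_inv, h1, Matrix.mul_assoc]

lemma proj_idem :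
    (Ascaled A b x * (gmat A b x)⁻¹ * (Ascaled A b x).transpose)
      * (Ascaled A b x * (gmat A b x)⁻¹ * (Ascaled A b x).transpose)
      = Ascaled A b x * (gmat A b x)⁻¹ * (Ascaled A b x).transpose := by
  have h := Matrix.nonsing_inv_mul _ (gmat_det_isUnit hrank hx)
  calc Ascaled A b x * (gmat A b x)⁻¹ * (Ascaled A b x).transpose
      * (Ascaled A b x * (gmat A b x)⁻¹ * (Ascaled A b x).transpose)
      = Ascaled A b x * ((gmat A b x)⁻¹ * gmat A b x) * ((gmat A b x)⁻¹ * (Ascaled A b x).transpose) := by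
        simp only [gmat, Matrix.mul_assoc]
    _ = _ := by rw [h]; simp [Matrix.mul_assoc]

lemma levScore_nonneg (i : Fin m) : 0 ≤ levScore A b x i := by
  set P := Ascaled A b x * (gmat A b x)⁻¹ * (Ascaled A b x).transpose with hP
  have h : levScore A b x i = ∑ k, P i k ^ 2 := by
    have := congrFun (congrFun (proj_idem hrank hx) i) i
    rw [← hP] at this
    rw [levScore, ← hP, ← this, Matrix.mul_apply]
    refine Finset.sum_congr rfl fun k _ => ?_
    have hs := congrFun (congrFun (proj_symm hrank hx) k) i
    rw [← hP] at hs
    rw [sq]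
    rw [show P k i = P i k from hs.symm ▸ rfl]
  rw [h]
  exact Finset.sum_nonneg fun k _ => sq_nonneg _

lemma levScore_le_one (i : Fin m) : levScore A b x i ≤ 1 := by
  set P := Ascaled A b x * (gmat A b x)⁻¹ * (Ascaled A b x).transpose with hP
  have h : levScore A b x i = ∑ k, P i k ^ 2 := by
    have := congrFun (congrFun (proj_idem hrank hx) i) i
    rw [← hP] at this
    rw [levScore, ← hP, ← this, Matrix.mul_apply]
    refine Finset.sum_congr rfl fun k _ => ?_
    have hs := congrFun (congrFun (proj_symm hrank hx) k) i
    rw [← hP] at hs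
    rw [sq]
    rw [show P k i = P i k from hs.symm ▸ rfl]
  have h2 : P i i ^ 2 ≤ ∑ k, P i k ^ 2 :=
    Finset.single_le_sum (fun k _ => sq_nonneg (P i k)) (Finset.mem_univ i)
  have h3 : levScore A b x i = P i i := rfl
  nlinarith [h, h2, h3]

lemma levScore_sum : ∑ i, levScore A b x i = (n : ℝ) := by
  have h : ∑ i, levScore A b x i
      = Matrix.trace (Ascaled A b x * (gmat A b x)⁻¹ * (Ascaled A b x).transpose) := rfl
  rw [h, Matrix.trace_mul_cycle, ← gmat,
    Matrix.mul_nonsing_inv _ (gmat_det_isUnit hrank hx)]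
  simp

end proj

open Matrix in
lemma part2 {m n : ℕ} {A : Matrix (Fin m) (Fin n) ℝ} {b : Fin m → ℝ}
    {x : Fin n → ℝ} (hrank : A.rank = n) (hx : ∀ i, b i < A.mulVec x i) :
    dotProduct
        (((gmat A b x)⁻¹).mulVec ((Ascaled A b x).transpose.mulVec (levScore A b x)))
        ((gmat A b x).mulVec
          (((gmat A b x)⁻¹).mulVec ((Ascaled A b x).transpose.mulVec (levScore A b x))))
      ≤ (n : ℝ) := by
  classical
  set H := gmat A b x with hH
  set Ax := Ascaled A b x with hAx
  set σ := levScore A b x with hσv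
  set P := Ax * H⁻¹ * Ax.transpose with hPdef
  have hdet := gmat_det_isUnit hrank hx
  have hHH : H * H⁻¹ = 1 := Matrix.mul_nonsing_inv _ hdet
  have hw : ∀ w, H.mulVec (H⁻¹.mulVec w) = w := fun w => by
    rw [Matrix.mulVec_mulVec, hHH, Matrix.one_mulVec]
  have hPv : P.mulVec σ = Ax.mulVec (H⁻¹.mulVec (Ax.transpose.mulVec σ)) := by
    rw [hPdef, ← Matrix.mulVec_mulVec, ← Matrix.mulVec_mulVec]
  have hvm : σ ᵥ* Ax = Ax.transpose.mulVec σ := by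
    rw [show Ax = Ax.transpose.transpose from (Matrix.transpose_transpose Ax).symm,
      Matrix.vecMul_transpose, Matrix.transpose_transpose]
  have key : dotProduct (H⁻¹.mulVec (Ax.transpose.mulVec σ))
      (H.mulVec (H⁻¹.mulVec (Ax.transpose.mulVec σ)))
      = dotProduct σ (P.mulVec σ) := by
    rw [hw, hPv]
    conv_rhs => rw [Matrix.dotProduct_mulVec, hvm]
    rw [dotProduct_comm]
  rw [key]
  have hidem := proj_idem hrank hx
  have hsymP := proj_symm hrank hx
  rw [← hPdef] at hidem hsymP
  have hPvm : σ ᵥ* P = P.mulVec σ := by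
    conv_lhs => rw [← hsymP]
    rw [Matrix.vecMul_transpose]
  have hsq : dotProduct σ (P.mulVec σ)
      = ∑ i, (P.mulVec σ) i ^ 2 := by
    conv_lhs => rw [← hidem]
    rw [← Matrix.mulVec_mulVec, Matrix.dotProduct_mulVec, hPvm]
    simp [dotProduct, sq]
  have hσ0 : ∀ i, 0 ≤ σ i := levScore_nonneg hrank hx
  have hσ1 : ∀ i, σ i ≤ 1 := levScore_le_one hrank hx
  have hσs : ∑ i, σ i = (n : ℝ) := levScore_sum hrank hx
  set t := dotProduct σ (P.mulVec σ) with ht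
  have ht0 : 0 ≤ t := by rw [hsq]; exact Finset.sum_nonneg fun i _ => sq_nonneg _
  have hcs : t ^ 2 ≤ (∑ i, σ i ^ 2) * (∑ i, (P.mulVec σ) i ^ 2) := by
    have h := Finset.sum_mul_sq_le_sq_mul_sq Finset.univ σ (P.mulVec σ)
    simpa [ht, dotProduct] using h
  have hS : (∑ i, σ i ^ 2) ≤ (n : ℝ) := by
    rw [← hσs]
    exact Finset.sum_le_sum fun i _ => by nlinarith [hσ0 i, hσ1 i]
  have hSn : (0:ℝ) ≤ ∑ i, σ i ^ 2 := Finset.sum_nonneg fun i _ => sq_nonneg _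
  nlinarith [hcs, hsq, ht0, hS, hSn]

/-! ### The algebraic identity for the drift -/

lemma alg_id {m n : ℕ} (Ax : Matrix (Fin m) (Fin n) ℝ) (B : Matrix (Fin n) (Fin n) ℝ)
    (i : Fin n) :
    (1/2) * ∑ j, (-(B * (Matrix.of fun p q => -2 * ∑ l, Ax l p * Ax l q * Ax l j) * B)) i j
      = B.mulVec (Ax.transpose.mulVec (fun l => (Ax * B * Ax.transpose) l l)) i := by
  simp only [Matrix.mul_apply, Matrix.mulVec, dotProduct, Matrix.neg_apply,
    Matrix.of_apply, Matrix.transpose_apply, Finset.mul_sum, Finset.sum_mul, neg_mul, mul_neg,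
    Finset.sum_neg_distrib, neg_neg]
  rw [Finset.sum_comm]
  conv_lhs => enter [2, q]; rw [Finset.sum_comm]
  conv_lhs => enter [2, q, 2, p]; rw [Finset.sum_comm]
  rw [Finset.sum_comm]
  conv_lhs => enter [2, p]; rw [Finset.sum_comm]
  conv_lhs => enter [2, p, 2, l]; rw [Finset.sum_comm]
  refine Finset.sum_congr rfl fun p _ => Finset.sum_congr rfl fun l _ =>
    Finset.sum_congr rfl fun q _ => Finset.sum_congr rfl fun j _ => by ring

/-! ### Differentiability of the Hessian and its inverse -/

section deriv
attribute [local instance] Matrix.linftyOpNormedAddCommGroup Matrix.linftyOpNormedRing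
  Matrix.linftyOpNormedSpace Matrix.linftyOpNormedAlgebra

variable {m n : ℕ} (A : Matrix (Fin m) (Fin n) ℝ) (b : Fin m → ℝ) (x : Fin n → ℝ)

/-- `v ↦ (A v) l` as a CLM. -/
noncomputable def rowCLM (l : Fin m) : (Fin n → ℝ) →L[ℝ] ℝ :=
  LinearMap.toContinuousLinearMap ((LinearMap.proj l).comp A.mulVecLin)

lemma rowCLM_apply (l : Fin m) (v : Fin n → ℝ) : rowCLM A l v = A.mulVec v l := rfl

lemma hasFDerivAt_slack (l : Fin m) :
    HasFDerivAt (fun y => slack A b y l) (rowCLM A l) x := by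
  have h : (fun y : Fin n → ℝ => slack A b y l) = fun y => rowCLM A l y - b l := by
    funext y; rfl
  rw [h]
  exact (rowCLM A l).hasFDerivAt.sub_const (b l)

lemma hasFDerivAt_slack_inv (hx : ∀ i, b i < A.mulVec x i) (l : Fin m) :
    HasFDerivAt (fun y => (slack A b y l)⁻¹)
      ((-(ContinuousLinearMap.mulLeftRight ℝ ℝ (slack A b x l)⁻¹ (slack A b x l)⁻¹)).comp
        (rowCLM A l)) x := by
  have hs : slack A b x l ≠ 0 := ne_of_gt (sub_pos.mpr (hx l))
  exact (hasFDerivAt_inv' hs).comp x (hasFDerivAt_slack A b x l)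

noncomputable def iCLM (l : Fin m) : (Fin n → ℝ) →L[ℝ] ℝ :=
  (-(ContinuousLinearMap.mulLeftRight ℝ ℝ (slack A b x l)⁻¹ (slack A b x l)⁻¹)).comp (rowCLM A l)

noncomputable def entryD (p q : Fin n) : (Fin n → ℝ) →L[ℝ] ℝ :=
  ∑ l, (A l p * A l q) •
    ((slack A b x l)⁻¹ • iCLM A b x l + (slack A b x l)⁻¹ • iCLM A b x l)

lemma hasFDerivAt_gmat_entry (hx : ∀ i, b i < A.mulVec x i) (p q : Fin n) :
    HasFDerivAt (fun y => gmat A b y p q) (entryD A b x p q) x := by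
  have h : (fun y => gmat A b y p q)
      = fun y => ∑ l, (A l p * A l q) * ((slack A b y l)⁻¹ * (slack A b y l)⁻¹) := by
    funext y
    rw [gmat, Matrix.mul_apply]
    refine Finset.sum_congr rfl fun l _ => ?_
    simp only [Matrix.transpose_apply, Ascaled, Matrix.of_apply, div_eq_mul_inv]
    ring
  rw [h]
  exact HasFDerivAt.fun_sum fun l _ =>
    (((hasFDerivAt_slack_inv A b x hx l).mul (hasFDerivAt_slack_inv A b x hx l)).const_mul _)

noncomputable def gmatD : (Fin n → ℝ) →L[ℝ] Matrix (Fin n) (Fin n) ℝ :=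
  ∑ p, ∑ q, (entryD A b x p q).smulRight (Matrix.single p q 1)

lemma hasFDerivAt_gmat (hx : ∀ i, b i < A.mulVec x i) :
    HasFDerivAt (fun y => gmat A b y) (gmatD A b x) x := by
  have h : (fun y => gmat A b y)
      = fun y => ∑ p, ∑ q, (gmat A b y p q) • Matrix.single p q (1:ℝ) := by
    funext y
    conv_lhs => rw [Matrix.matrix_eq_sum_single (gmat A b y)]
    refine Finset.sum_congr rfl fun p _ => Finset.sum_congr rfl fun q _ => ?_
    ext i j
    simp [Matrix.single, Matrix.smul_apply, mul_ite]
  rw [h, gmatD]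
  exact HasFDerivAt.fun_sum fun p _ => HasFDerivAt.fun_sum fun q _ =>
    (hasFDerivAt_gmat_entry A b x hx p q).smul_const _

noncomputable def entryCLM (i j : Fin n) : Matrix (Fin n) (Fin n) ℝ →L[ℝ] ℝ :=
  LinearMap.toContinuousLinearMap
    { toFun := fun M => M i j, map_add' := fun _ _ => rfl, map_smul' := fun _ _ => rfl }

lemma entryCLM_apply (i j : Fin n) (M : Matrix (Fin n) (Fin n) ℝ) :
    entryCLM i j M = M i j := rfl

lemma hasFDerivAt_inv_gmat (hx : ∀ i, b i < A.mulVec x i) (hu : IsUnit (gmat A b x))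
    (i j : Fin n) :
    HasFDerivAt (fun y => ((gmat A b y)⁻¹) i j)
      ((entryCLM i j).comp
        ((-(ContinuousLinearMap.mulLeftRight ℝ (Matrix (Fin n) (Fin n) ℝ)
            (gmat A b x)⁻¹ (gmat A b x)⁻¹)).comp (gmatD A b x))) x := by
  have hinv : HasFDerivAt (Ring.inverse : Matrix (Fin n) (Fin n) ℝ → _)
      (-(ContinuousLinearMap.mulLeftRight ℝ (Matrix (Fin n) (Fin n) ℝ)
          (gmat A b x)⁻¹ (gmat A b x)⁻¹)) (gmat A b x) := by
    have h := hasFDerivAt_ringInverse (𝕜 := ℝ) hu.unit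
    rw [hu.unit_spec] at h
    rw [show ((hu.unit⁻¹ : (Matrix (Fin n) (Fin n) ℝ)ˣ) : Matrix (Fin n) (Fin n) ℝ)
        = (gmat A b x)⁻¹ from by rw [Matrix.coe_units_inv, hu.unit_spec]] at h
    exact h
  have hcomp := hinv.comp x (hasFDerivAt_gmat A b x hx)
  have hfull := ((entryCLM i j).hasFDerivAt.comp x hcomp)
  have hfn : (fun y => ((gmat A b y)⁻¹) i j)
      = fun y => entryCLM i j (Ring.inverse (gmat A b y)) := by
    funext y
    rw [Matrix.nonsing_inv_eq_ringInverse]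
    rfl
  rw [hfn]
  exact hfull

lemma gmatD_apply (v : Fin n → ℝ) (p q : Fin n) :
    gmatD A b x v p q = entryD A b x p q v := by
  simp [gmatD, ContinuousLinearMap.sum_apply, Matrix.sum_apply, Matrix.single,
    Matrix.smul_apply, mul_ite, ite_and, Finset.sum_ite_eq, Finset.sum_ite_eq']

lemma entryD_single (hx : ∀ i, b i < A.mulVec x i) (p q j : Fin n) :
    entryD A b x p q (Pi.single j 1)
      = -2 * ∑ l, Ascaled A b x l p * Ascaled A b x l q * Ascaled A b x l j := by
  rw [entryD, ContinuousLinearMap.sum_apply, Finset.mul_sum]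
  refine Finset.sum_congr rfl fun l _ => ?_
  have hs : slack A b x l ≠ 0 := ne_of_gt (sub_pos.mpr (hx l))
  simp only [ContinuousLinearMap.smul_apply, ContinuousLinearMap.add_apply, iCLM,
    ContinuousLinearMap.comp_apply, ContinuousLinearMap.neg_apply,
    ContinuousLinearMap.mulLeftRight_apply, rowCLM_apply, Matrix.mulVec_single_one, Matrix.col_apply,
    Ascaled, Matrix.of_apply, smul_eq_mul, mul_one, div_eq_mul_inv]
  field_simp
  ring

lemma gmatD_single (hx : ∀ i, b i < A.mulVec x i) (j : Fin n) :
    gmatD A b x (Pi.single j 1)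
      = Matrix.of fun p q =>
          -2 * ∑ l, Ascaled A b x l p * Ascaled A b x l q * Ascaled A b x l j := by
  ext p q
  rw [gmatD_apply, entryD_single A b x hx]
  rfl

lemma fderiv_inv_gmat (hx : ∀ i, b i < A.mulVec x i) (hu : IsUnit (gmat A b x))
    (i j j' : Fin n) :
    fderiv ℝ (fun y => ((gmat A b y)⁻¹) i j) x (Pi.single j' 1)
      = (-((gmat A b x)⁻¹ * (Matrix.of fun p q =>
          -2 * ∑ l, Ascaled A b x l p * Ascaled A b x l q * Ascaled A b x l j')
          * (gmat A b x)⁻¹)) i j := by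
  rw [(hasFDerivAt_inv_gmat A b x hx hu i j).fderiv]
  erw [ContinuousLinearMap.comp_apply, ContinuousLinearMap.comp_apply,
    ContinuousLinearMap.neg_apply, ContinuousLinearMap.mulLeftRight_apply,
    gmatD_single A b x hx, entryCLM_apply]

end deriv

lemma part1 {m n : ℕ} {A : Matrix (Fin m) (Fin n) ℝ} {b : Fin m → ℝ}
    {x : Fin n → ℝ} (hrank : A.rank = n) (hx : ∀ i, b i < A.mulVec x i) :
    (fun i => (1/2) * ∑ j, fderiv ℝ (fun y => ((gmat A b y)⁻¹) i j) x (Pi.single j 1))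
      = ((gmat A b x)⁻¹).mulVec ((Ascaled A b x).transpose.mulVec (levScore A b x)) := by
  have hu := gmat_isUnit hrank hx
  funext i
  have h : ∀ j : Fin n, fderiv ℝ (fun y => ((gmat A b y)⁻¹) i j) x (Pi.single j 1)
      = (-((gmat A b x)⁻¹ * (Matrix.of fun p q =>
          -2 * ∑ l, Ascaled A b x l p * Ascaled A b x l q * Ascaled A b x l j)
          * (gmat A b x)⁻¹)) i j := fun j => fderiv_inv_gmat A b x hx hu i j j
  rw [Finset.sum_congr rfl fun j _ => h j]
  exact alg_id (Ascaled A b x) ((gmat A b x)⁻¹) i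


/-- For the logarithmic barrier, the drift
`μᵢ(x) = (1/2) ∑ⱼ ∂/∂xⱼ ((∇²φ(x))⁻¹)_{ij}` equals `(A_xᵀA_x)⁻¹ A_xᵀ σ_x`,
and `‖μ(x)‖²_x ≤ n`. -/
theorem drift_log_barrier {m n : ℕ} (A : Matrix (Fin m) (Fin n) ℝ) (b : Fin m → ℝ)
    (x : Fin n → ℝ) (hrank : A.rank = n) (hx : ∀ i, b i < A.mulVec x i) :
    (fun i => (1/2) * ∑ j, fderiv ℝ (fun y => ((gmat A b y)⁻¹) i j) x (Pi.single j 1))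
      = ((gmat A b x)⁻¹).mulVec ((Ascaled A b x).transpose.mulVec (levScore A b x)) ∧
    dotProduct
        (((gmat A b x)⁻¹).mulVec ((Ascaled A b x).transpose.mulVec (levScore A b x)))
        ((gmat A b x).mulVec
          (((gmat A b x)⁻¹).mulVec ((Ascaled A b x).transpose.mulVec (levScore A b x))))
      ≤ (n : ℝ) := by
  exact ⟨part1 hrank hx, part2 hrank hx⟩
end

section
/- Let ψ_k(x) = ((−1)^{k−1} √(1−x_k²) cos(d·arccos x))/(d(x − x_k)) be the Lagrange basis polynomial on the Chebyshev nodes x_k = cos((2k−1)π/(2d)), k ∈ {1,…,d}. Then for every t ∈ [−1, 1], |∫_{−1}^{t} ψ_k(x) dx| ≤ 2000/d. -/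
open Real Finset


noncomputable def Aa (m : ℕ) (x : ℝ) : ℝ :=
  (Real.cos (((m:ℝ)+1)*Real.arccos x)/((m:ℝ)+1)
    - Real.cos (((m:ℝ)-1)*Real.arccos x)/((m:ℝ)-1))/2



lemma telesum (g : ℕ → ℝ) : ∀ {a n : ℕ}, a ≤ n →
    ∑ m ∈ Finset.Ico a n, (g m - g (m+1)) = g a - g n := by
  intro a n h
  induction n, h using Nat.le_induction with
  | base => simp
  | succ n h ih => rw [Finset.sum_Ico_succ_top h, ih]; ring

lemma dirich (γ : ℝ) : ∀ {a n : ℕ}, a ≤ n →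
    2 * Real.sin (γ/2) * ∑ m ∈ Finset.Ico a n, Real.sin (m * γ)
      = Real.cos (a*γ - γ/2) - Real.cos (n*γ - γ/2) := by
  intro a n h
  induction n, h using Nat.le_induction with
  | base => simp
  | succ n h ih =>
    rw [Finset.sum_Ico_succ_top h, mul_add, ih]
    have : Real.cos ((n:ℝ)*γ - γ/2) - Real.cos (((n:ℕ)+1:ℕ)*γ - γ/2)
        = 2 * Real.sin (γ/2) * Real.sin (n*γ) := by
      push_cast
      rw [show ((n:ℝ)+1)*γ - γ/2 = (n*γ) + γ/2 by ring, show (n:ℝ)*γ - γ/2 = (n*γ) - γ/2 by ring,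
        Real.cos_sub, Real.cos_add]
      ring
    push_cast at this ⊢
    linarith

lemma abel (γ : ℝ) (a : ℕ) : ∀ {n : ℕ}, a ≤ n →
    ∑ m ∈ Finset.Ico a n, Real.sin (m*γ) / (m+1)
      = (∑ m ∈ Finset.Ico a n, (∑ i ∈ Finset.Ico a (m+1), Real.sin (i*γ)) * (1/(m+1) - 1/(m+2)))
        + (∑ i ∈ Finset.Ico a n, Real.sin (i*γ)) / (n+1) := by
  intro n h
  induction n, h using Nat.le_induction with
  | base => simp
  | succ n h ih =>
    have hs : ∑ i ∈ Finset.Ico a (n+1), Real.sin (i*γ)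
        = (∑ i ∈ Finset.Ico a n, Real.sin (i*γ)) + Real.sin (n*γ) :=
      Finset.sum_Ico_succ_top h _
    rw [Finset.sum_Ico_succ_top h, Finset.sum_Ico_succ_top h, ih, hs]
    push_cast
    ring


lemma crux_core {γ : ℝ} (h0 : 0 < γ) (hπ : γ ≤ π) (n : ℕ) :
    |∑ m ∈ Finset.Ico 2 n, Real.sin (m*γ) / (m+1)| ≤ 8 := by
  have hs2 : 0 < Real.sin (γ/2) := by
    apply Real.sin_pos_of_pos_of_lt_pi (by linarith)
    have := Real.pi_pos; linarith
  have hsge : γ/π ≤ Real.sin (γ/2) := by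
    have := Real.mul_le_sin (x := γ/2) (by linarith) (by linarith)
    have hπ0 := Real.pi_pos
    calc γ/π = 2/π * (γ/2) := by field_simp
    _ ≤ _ := this
  have hπ0 := Real.pi_pos
  -- partial sums bound
  have hT : ∀ a j : ℕ, a ≤ j → |∑ i ∈ Finset.Ico a j, Real.sin (i*γ)| ≤ 1 / Real.sin (γ/2) := by
    intro a j haj
    have h2 := dirich γ haj
    have : |2 * Real.sin (γ/2) * ∑ i ∈ Finset.Ico a j, Real.sin (i*γ)| ≤ 2 := by
      rw [h2]
      have := Real.neg_one_le_cos ((a:ℝ)*γ - γ/2)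
      have := Real.cos_le_one ((a:ℝ)*γ - γ/2)
      have := Real.neg_one_le_cos ((j:ℝ)*γ - γ/2)
      have := Real.cos_le_one ((j:ℝ)*γ - γ/2)
      rw [abs_le]; constructor <;> linarith
    rw [abs_mul, abs_of_pos (by linarith : (0:ℝ) < 2 * Real.sin (γ/2))] at this
    rw [le_div_iff₀ hs2]
    nlinarith [abs_nonneg (∑ i ∈ Finset.Ico a j, Real.sin (i*γ))]
  by_cases hn : n ≤ 2
  · rw [Finset.Ico_eq_empty (by omega)]; simp
  push_neg at hn
  set N : ℕ := min n (Nat.ceil (1/γ) + 2) with hN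
  have hN2 : 2 ≤ N := le_min (by omega) (by omega)
  have hNn : N ≤ n := min_le_left _ _
  rw [← Finset.sum_Ico_consecutive _ hN2 hNn]
  have head : |∑ m ∈ Finset.Ico 2 N, Real.sin (m*γ) / (m+1)| ≤ 1 + π := by
    calc |∑ m ∈ Finset.Ico 2 N, Real.sin (m*γ) / (m+1)|
        ≤ ∑ m ∈ Finset.Ico 2 N, |Real.sin (m*γ) / (m+1)| := Finset.abs_sum_le_sum_abs _ _
      _ ≤ ∑ m ∈ Finset.Ico 2 N, γ := by
          apply Finset.sum_le_sum
          intro m _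
          rw [abs_div]
          have h1 : |Real.sin ((m:ℝ)*γ)| ≤ (m:ℝ)*γ :=
            le_trans Real.abs_sin_le_abs (le_of_eq (abs_of_nonneg (by positivity)))
          have h2 : |((m:ℝ)+1)| = (m:ℝ)+1 := abs_of_pos (by positivity)
          rw [h2, div_le_iff₀ (by positivity)]
          nlinarith [Nat.cast_nonneg (α := ℝ) m]
      _ = (N - 2 : ℕ) * γ := by rw [Finset.sum_const, Nat.card_Ico]; simp
      _ ≤ (1/γ + 1) * γ := by
          apply mul_le_mul_of_nonneg_right _ (le_of_lt h0)
          have h3 : ((N - 2 : ℕ) : ℝ) ≤ (Nat.ceil (1/γ) : ℝ) := by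
            have : N - 2 ≤ Nat.ceil (1/γ) := by omega
            exact_mod_cast this
          have h4 : (Nat.ceil (1/γ) : ℝ) < 1/γ + 1 := Nat.ceil_lt_add_one (by positivity)
          linarith
      _ = 1 + γ := by field_simp
      _ ≤ 1 + π := by linarith
  have tail : |∑ m ∈ Finset.Ico N n, Real.sin (m*γ) / (m+1)| ≤ π := by
    rcases eq_or_lt_of_le hNn with h | h
    · rw [h, Finset.Ico_self]; simp; linarith
    · have hNval : N = Nat.ceil (1/γ) + 2 := by
        rcases min_cases n (Nat.ceil (1/γ) + 2) with ⟨h1, h2⟩ | ⟨h1, h2⟩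
        · omega
        · omega
      have hN1 : 1/γ ≤ (N:ℝ) + 1 := by
        have : (1/γ : ℝ) ≤ Nat.ceil (1/γ) := Nat.le_ceil _
        have h5 : ((Nat.ceil (1/γ) : ℕ) : ℝ) ≤ (N:ℝ) := by
          rw [hNval]; push_cast; linarith
        linarith
      have hb1 : |∑ m ∈ Finset.Ico N n, (∑ i ∈ Finset.Ico N (m+1), Real.sin (i*γ)) * (1/(m+1) - 1/(m+2))|
          ≤ (1/Real.sin (γ/2)) * (1/(N+1) - 1/(n+1)) := by
        calc |∑ m ∈ Finset.Ico N n, (∑ i ∈ Finset.Ico N (m+1), Real.sin (i*γ)) * (1/(m+1) - 1/(m+2))|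
            ≤ ∑ m ∈ Finset.Ico N n, |(∑ i ∈ Finset.Ico N (m+1), Real.sin (i*γ)) * (1/(m+1) - 1/(m+2))| :=
              Finset.abs_sum_le_sum_abs _ _
          _ ≤ ∑ m ∈ Finset.Ico N n, (1/Real.sin (γ/2)) * (1/(m+1) - 1/(m+2)) := by
              apply Finset.sum_le_sum
              intro m hm
              rw [Finset.mem_Ico] at hm
              rw [abs_mul]
              have hmono : (0:ℝ) ≤ 1/((m:ℝ)+1) - 1/((m:ℝ)+2) := by
                rw [sub_nonneg, div_le_div_iff₀ (by positivity) (by positivity)]; linarith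
              rw [abs_of_nonneg hmono]
              exact mul_le_mul_of_nonneg_right (hT N (m+1) (by omega)) hmono
          _ = (1/Real.sin (γ/2)) * ∑ m ∈ Finset.Ico N n, ((1:ℝ)/((m:ℝ)+1) - 1/((m:ℝ)+2)) := by
              rw [Finset.mul_sum]
          _ = (1/Real.sin (γ/2)) * (1/(N+1) - 1/(n+1)) := by
              congr 1
              have h9 := telesum (fun m => 1/((m:ℝ)+1)) hNn
              rw [← h9]
              apply Finset.sum_congr rfl
              intro m _
              push_cast
              ring_nf
      have hb2 : |(∑ i ∈ Finset.Ico N n, Real.sin (i*γ)) / (n+1)| ≤ (1/Real.sin (γ/2)) / (n+1) := by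
        rw [abs_div, abs_of_pos (by positivity : (0:ℝ) < (n:ℝ)+1)]
        gcongr
        exact hT N n hNn
      have hs_inv : 1/Real.sin (γ/2) ≤ π/γ := by
        rw [div_le_div_iff₀ hs2 h0]
        have h7 := mul_le_mul_of_nonneg_left hsge (le_of_lt hπ0)
        have h8 : π * (γ/π) = γ := by field_simp
        linarith
      have hinvN : 1/((N:ℝ)+1) ≤ γ := by
        rw [div_le_iff₀ (by positivity)]
        have hγN : 1 ≤ γ * ((N:ℝ)+1) := by
          have := (div_le_iff₀ h0).mp hN1
          nlinarith
        linarith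
      have hprod : (1/Real.sin (γ/2)) * (1/((N:ℝ)+1)) ≤ π := by
        have h1 : (1/Real.sin (γ/2)) * (1/((N:ℝ)+1)) ≤ (π/γ) * γ := by
          apply mul_le_mul hs_inv hinvN (by positivity) (by positivity)
        have h2 : (π/γ) * γ = π := by field_simp
        linarith
      calc |∑ m ∈ Finset.Ico N n, Real.sin (m*γ) / (m+1)|
          ≤ (1/Real.sin (γ/2)) * (1/(N+1) - 1/(n+1)) + (1/Real.sin (γ/2)) / (n+1) := by
            rw [abel γ N hNn]
            exact le_trans (abs_add_le _ _) (add_le_add hb1 hb2)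
        _ = (1/Real.sin (γ/2)) * (1/((N:ℝ)+1)) := by field_simp; ring
        _ ≤ π := hprod
  calc |∑ m ∈ Finset.Ico 2 N, Real.sin (m*γ)/(m+1) + ∑ m ∈ Finset.Ico N n, Real.sin (m*γ)/(m+1)|
      ≤ |∑ m ∈ Finset.Ico 2 N, Real.sin (m*γ)/(m+1)| + |∑ m ∈ Finset.Ico N n, Real.sin (m*γ)/(m+1)| := abs_add_le _ _
    _ ≤ (1 + π) + π := by linarith
    _ ≤ 8 := by have := Real.pi_lt_d2; linarith


lemma crux (γ : ℝ) (n : ℕ) : |∑ m ∈ Finset.Ico 2 n, Real.sin ((m:ℝ)*γ) / (m+1)| ≤ 8 := by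
  have hπ0 := Real.pi_pos
  obtain ⟨γ', h0, h2π, hsin⟩ : ∃ γ', 0 ≤ γ' ∧ γ' < 2*π ∧
      ∀ m : ℕ, Real.sin (m*γ) = Real.sin (m*γ') := by
    refine ⟨γ - ⌊γ/(2*π)⌋ * (2*π), ?_, ?_, ?_⟩
    · have h1 := Int.fract_nonneg (γ/(2*π))
      have h2 : γ/(2*π) - ⌊γ/(2*π)⌋ = Int.fract (γ/(2*π)) := rfl
      have h3 : 0 ≤ γ/(2*π) - ⌊γ/(2*π)⌋ := h2 ▸ h1
      have h4 : γ - ↑⌊γ/(2*π)⌋ * (2*π) = (γ/(2*π) - ⌊γ/(2*π)⌋) * (2*π) := by field_simp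
      rw [h4]; positivity
    · have h1 := Int.fract_lt_one (γ/(2*π))
      have h2 : γ/(2*π) - ⌊γ/(2*π)⌋ = Int.fract (γ/(2*π)) := rfl
      have h3 : γ/(2*π) - ⌊γ/(2*π)⌋ < 1 := h2 ▸ h1
      have h4 : γ - ↑⌊γ/(2*π)⌋ * (2*π) = (γ/(2*π) - ⌊γ/(2*π)⌋) * (2*π) := by field_simp
      rw [h4]
      nlinarith
    · intro m
      have : (m:ℝ)*γ = (m:ℝ)*(γ - ⌊γ/(2*π)⌋ * (2*π)) + ((m*⌊γ/(2*π)⌋ : ℤ) : ℝ) * (2*π) := by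
        push_cast; ring
      rw [this, Real.sin_add_int_mul_two_pi]
  simp only [hsin]
  rcases eq_or_lt_of_le h0 with h | h
  · simp [← h]
  rcases le_or_gt γ' π with hle | hgt
  · exact crux_core h hle n
  · have hδ0 : 0 < 2*π - γ' := by linarith
    have hδπ : 2*π - γ' ≤ π := by linarith
    have hneg : ∀ m : ℕ, Real.sin (m*γ') = -Real.sin (m*(2*π - γ')) := by
      intro m
      have h1 : (m:ℝ)*γ' = -((m:ℝ)*(2*π - γ')) + ((m : ℤ) : ℝ) * (2*π) := by push_cast; ring
      rw [h1, Real.sin_add_int_mul_two_pi, Real.sin_neg]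
    simp only [hneg]
    have : ∑ m ∈ Finset.Ico 2 n, -Real.sin (m*(2*π - γ')) / (m+1)
        = -∑ m ∈ Finset.Ico 2 n, Real.sin (m*(2*π - γ')) / (m+1) := by
      rw [← Finset.sum_neg_distrib]
      apply Finset.sum_congr rfl; intro m _; ring
    rw [this, abs_neg]
    exact crux_core hδ0 hδπ n


lemma cd (θ ψ : ℝ) : ∀ n : ℕ,
    (Real.cos θ - Real.cos ψ) *
        (1 + 2*∑ j ∈ Finset.range n, Real.cos ((j+1)*θ) * Real.cos ((j+1)*ψ))
      = Real.cos ((n+1)*θ)*Real.cos (n*ψ) - Real.cos (n*θ)*Real.cos ((n+1)*ψ) := by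
  intro n
  induction n with
  | zero => simp
  | succ n ih =>
    rw [Finset.sum_range_succ]
    push_cast at ih ⊢
    rw [show ((n:ℝ)+1+1)*θ = ((n:ℝ)+1)*θ + θ by ring,
        show ((n:ℝ)+1+1)*ψ = ((n:ℝ)+1)*ψ + ψ by ring,
        show (n:ℝ)*θ = ((n:ℝ)+1)*θ - θ by ring,
        show (n:ℝ)*ψ = ((n:ℝ)+1)*ψ - ψ by ring] at *
    rw [Real.cos_add, Real.cos_sub, Real.cos_add, Real.cos_sub] at *
    linear_combination ih


section
variable {d k : ℕ} (hd : 1 ≤ d) (hk1 : 1 ≤ k) (hkd : k ≤ d)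

include hd in
lemma node_cos_zero : Real.cos ((d:ℝ) * ((2*(k:ℝ)-1)*π/(2*(d:ℝ)))) = 0 := by
  have hd0 : (d:ℝ) ≠ 0 := Nat.cast_ne_zero.mpr (by omega)
  rw [show (d:ℝ) * ((2*(k:ℝ)-1)*π/(2*(d:ℝ))) = (k:ℝ)*π - π/2 by field_simp,
    Real.cos_nat_mul_pi_sub, Real.cos_pi_div_two, mul_zero]

include hd hk1 in
lemma node_sin : Real.sin ((d:ℝ) * ((2*(k:ℝ)-1)*π/(2*(d:ℝ)))) = (-1:ℝ)^(k-1) := by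
  have hd0 : (d:ℝ) ≠ 0 := Nat.cast_ne_zero.mpr (by omega)
  rw [show (d:ℝ) * ((2*(k:ℝ)-1)*π/(2*(d:ℝ))) = (k:ℝ)*π - π/2 by field_simp,
    Real.sin_nat_mul_pi_sub, Real.sin_pi_div_two, mul_one]
  obtain ⟨k', rfl⟩ : ∃ k', k = k' + 1 := ⟨k - 1, by omega⟩
  simp [pow_succ]

include hd hk1 hkd in
lemma node_range : 0 < (2*(k:ℝ)-1)*π/(2*(d:ℝ)) ∧ (2*(k:ℝ)-1)*π/(2*(d:ℝ)) < π := by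
  have hπ := Real.pi_pos
  have hd0 : (0:ℝ) < (d:ℝ) := by exact_mod_cast (by omega : 0 < d)
  have hk0 : (1:ℝ) ≤ (k:ℝ) := by exact_mod_cast hk1
  have hkd' : (k:ℝ) ≤ (d:ℝ) := by exact_mod_cast hkd
  constructor
  · apply div_pos (by nlinarith) (by linarith)
  · rw [div_lt_iff₀ (by linarith)]
    nlinarith

include hd hk1 hkd in
lemma eqP (x : ℝ) (hx : x ∈ Set.Icc (-1:ℝ) 1) (hne : x ≠ Real.cos ((2*(k:ℝ)-1)*π/(2*(d:ℝ)))) :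
    ((-1 : ℝ) ^ (k - 1) * Real.sqrt (1 - Real.cos ((2*(k:ℝ)-1)*π/(2*(d:ℝ))) ^ 2) *
        Real.cos ((d:ℝ) * Real.arccos x)) / ((d:ℝ) * (x - Real.cos ((2*(k:ℝ)-1)*π/(2*(d:ℝ)))))
    = (1 + 2*∑ j ∈ Finset.range (d-1),
        Real.cos ((j+1)*Real.arccos x) * Real.cos ((j+1)*((2*(k:ℝ)-1)*π/(2*(d:ℝ))))) / d := by
  set θk := (2*(k:ℝ)-1)*π/(2*(d:ℝ)) with hθk
  have hrange := node_range hd hk1 hkd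
  have hd0 : (0:ℝ) < (d:ℝ) := by exact_mod_cast (by omega : 0 < d)
  have hsqrt : Real.sqrt (1 - Real.cos θk ^ 2) = Real.sin θk :=
    (Real.sin_eq_sqrt_one_sub_cos_sq (le_of_lt hrange.1) (le_of_lt hrange.2)).symm
  have hcd := cd (Real.arccos x) θk (d-1)
  have hcast : ((d-1:ℕ):ℝ) = (d:ℝ) - 1 := by
    have : (1:ℕ) ≤ d := hd
    push_cast [this]
    ring
  rw [hcast] at hcd
  rw [show ((d:ℝ)-1+1) = (d:ℝ) by ring] at hcd
  rw [Real.cos_arccos hx.1 hx.2] at hcd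
  have hc1 : Real.cos (((d:ℝ)-1)*θk) = (-1:ℝ)^(k-1) * Real.sin θk := by
    rw [show ((d:ℝ)-1)*θk = (d:ℝ)*θk - θk by ring, Real.cos_sub,
      node_cos_zero hd, node_sin hd hk1]
    ring
  rw [node_cos_zero hd, hc1] at hcd
  -- hcd : (x - cos θk) * (1 + 2*∑ ...) = cos (d*arccos x) * ((-1)^(k-1) * sin θk)
  rw [hsqrt, div_eq_div_iff (by
      have : x - Real.cos θk ≠ 0 := sub_ne_zero.mpr hne
      positivity) (by positivity)]
  linear_combination (-(d:ℝ)) * hcd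

lemma Aa_cont (m : ℕ) : Continuous (Aa m) := by
  unfold Aa
  have h := Real.continuous_arccos
  exact (((Real.continuous_cos.comp (continuous_const.mul h)).div_const _).sub ((Real.continuous_cos.comp (continuous_const.mul h)).div_const _)).div_const _

lemma Aa_deriv (m : ℕ) (hm : 2 ≤ m) {x : ℝ} (hx1 : -1 < x) (hx2 : x < 1) :
    HasDerivAt (Aa m) (Real.cos ((m:ℝ)*Real.arccos x)) x := by
  have hm1 : ((m:ℝ)+1) ≠ 0 := by positivity
  have hm2 : ((m:ℝ)-1) ≠ 0 := by
    have : (2:ℝ) ≤ (m:ℝ) := by exact_mod_cast hm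
    linarith
  have h1 : HasDerivAt Real.arccos (-(1/Real.sqrt (1-x^2))) x :=
    Real.hasDerivAt_arccos (by linarith) (by linarith)
  have hc : ∀ c:ℝ, HasDerivAt (fun y => Real.cos (c * Real.arccos y))
      (Real.sin (c*Real.arccos x) * (c/Real.sqrt (1-x^2))) x := by
    intro c
    have h2 := (Real.hasDerivAt_cos (c * Real.arccos x)).comp x (h1.const_mul c)
    refine h2.congr_deriv ?_
    ring
  have h3 := (((hc ((m:ℝ)+1)).div_const ((m:ℝ)+1)).sub
      ((hc ((m:ℝ)-1)).div_const ((m:ℝ)-1))).div_const 2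
  refine h3.congr_deriv ?_
  have hs : Real.sin (Real.arccos x) = Real.sqrt (1-x^2) := Real.sin_arccos x
  have hspos : (0:ℝ) < Real.sqrt (1-x^2) := Real.sqrt_pos.mpr (by nlinarith)
  have hid : Real.sin (((m:ℝ)+1)*Real.arccos x) - Real.sin (((m:ℝ)-1)*Real.arccos x)
      = 2 * Real.cos ((m:ℝ)*Real.arccos x) * Real.sin (Real.arccos x) := by
    rw [show ((m:ℝ)+1)*Real.arccos x = (m:ℝ)*Real.arccos x + Real.arccos x by ring,
      show ((m:ℝ)-1)*Real.arccos x = (m:ℝ)*Real.arccos x - Real.arccos x by ring,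
      Real.sin_add, Real.sin_sub]
    ring
  rw [hs] at hid
  have hspos' : Real.sqrt (1-x^2) ≠ 0 := ne_of_gt hspos
  have e : Real.sin (((m:ℝ)+1)*Real.arccos x) * (((m:ℝ)+1)/Real.sqrt (1-x^2))/((m:ℝ)+1)
      - Real.sin (((m:ℝ)-1)*Real.arccos x) * (((m:ℝ)-1)/Real.sqrt (1-x^2))/((m:ℝ)-1)
      = (Real.sin (((m:ℝ)+1)*Real.arccos x) - Real.sin (((m:ℝ)-1)*Real.arccos x))
          / Real.sqrt (1-x^2) := by
    field_simp
  rw [e, hid, mul_div_assoc, div_self hspos']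
  ring

lemma Gval (m : ℕ) (hm : 2 ≤ m) (t : ℝ) (ht : t ∈ Set.Icc (-1:ℝ) 1) :
    ∫ x in (-1:ℝ)..t, Real.cos ((m:ℝ) * Real.arccos x) = Aa m t - Aa m (-1) := by
  apply intervalIntegral.integral_eq_sub_of_hasDeriv_right_of_le ht.1
    ((Aa_cont m).continuousOn)
  · intro x hx
    exact (Aa_deriv m hm (by exact hx.1) (lt_of_lt_of_le hx.2 ht.2)).hasDerivWithinAt
  · exact (Real.continuous_cos.comp (continuous_const.mul Real.continuous_arccos)).intervalIntegrable _ _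

lemma Gone (t : ℝ) (ht : t ∈ Set.Icc (-1:ℝ) 1) :
    ∫ x in (-1:ℝ)..t, Real.cos (Real.arccos x) = (t^2-1)/2 := by
  rw [intervalIntegral.integral_congr (g := fun x => x)]
  · rw [integral_id]
    norm_num
  · intro x hx
    rw [Set.uIcc_of_le ht.1] at hx
    exact Real.cos_arccos (hx.1) (le_trans hx.2 ht.2)


lemma perm (c φ : ℝ) (m : ℕ) (hm : 2 ≤ m) :
    (Real.cos (((m:ℝ)+1)*φ)/((m:ℝ)+1) - Real.cos (((m:ℝ)-1)*φ)/((m:ℝ)-1))/2 * Real.cos ((m:ℝ)*c)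
      = -Real.sin φ * (Real.sin ((m:ℝ)*(c+φ))/((m:ℝ)+1))/2
        + Real.sin φ * (Real.sin ((m:ℝ)*(c-φ))/((m:ℝ)+1))/2
        + (1/((m:ℝ)+1) - 1/((m:ℝ)-1)) *
            (Real.cos ((m:ℝ)*(c+φ) - φ) + Real.cos ((m:ℝ)*(c-φ) + φ))/4 := by
  have hm' : (2:ℝ) ≤ (m:ℝ) := by exact_mod_cast hm
  have hp : ((m:ℝ)+1) ≠ 0 := by positivity
  have hq : ((m:ℝ)-1) ≠ 0 := by linarith
  rw [show ((m:ℝ)+1)*φ = (m:ℝ)*φ + φ by ring, show ((m:ℝ)-1)*φ = (m:ℝ)*φ - φ by ring,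
      show (m:ℝ)*(c+φ) = (m:ℝ)*c + (m:ℝ)*φ by ring,
      show (m:ℝ)*(c-φ) = (m:ℝ)*c - (m:ℝ)*φ by ring]
  simp only [Real.cos_add, Real.cos_sub, Real.sin_add, Real.sin_sub]
  field_simp
  ring

set_option maxHeartbeats 1600000 in
/-- Integral bound for Chebyshev Lagrange basis polynomials: with
`x_k = cos((2k−1)π/(2d))` and
`ψ_k(x) = ((−1)^{k−1} √(1−x_k²) cos(d·arccos x))/(d(x − x_k))`, one has
`|∫_{−1}^t ψ_k| ≤ 2000/d` for all `t ∈ [−1,1]`. -/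
theorem chebyshev_lagrange_integral_bound (d k : ℕ) (hd : 1 ≤ d)
    (hk1 : 1 ≤ k) (hkd : k ≤ d) (t : ℝ) (ht : t ∈ Set.Icc (-1 : ℝ) 1) :
    |∫ x in (-1 : ℝ)..t,
        ((-1 : ℝ) ^ (k - 1) *
            Real.sqrt (1 - Real.cos ((2 * (k:ℝ) - 1) * Real.pi / (2 * (d:ℝ))) ^ 2) *
            Real.cos ((d:ℝ) * Real.arccos x)) /
          ((d:ℝ) * (x - Real.cos ((2 * (k:ℝ) - 1) * Real.pi / (2 * (d:ℝ)))))| ≤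
      2000 / (d:ℝ) := by
  have hπ := Real.pi_pos
  have hd0 : (0:ℝ) < (d:ℝ) := by exact_mod_cast (by omega : 0 < d)
  set θk := (2 * (k:ℝ) - 1) * π / (2 * (d:ℝ)) with hθk
  set φ := Real.arccos t with hφ
  -- step 1 : replace integrand by continuous version
  have hcongr : (∫ x in (-1:ℝ)..t,
      ((-1 : ℝ) ^ (k - 1) * Real.sqrt (1 - Real.cos θk ^ 2) *
        Real.cos ((d:ℝ) * Real.arccos x)) / ((d:ℝ) * (x - Real.cos θk)))
      = ∫ x in (-1:ℝ)..t, (1 + 2*∑ j ∈ Finset.range (d-1),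
          Real.cos ((j+1)*Real.arccos x) * Real.cos ((j+1)*θk)) / d := by
    apply intervalIntegral.integral_congr_ae
    have hae : ∀ᵐ (x:ℝ), x ≠ Real.cos θk := by
      have h0 : MeasureTheory.volume ({Real.cos θk} : Set ℝ) = 0 :=
        MeasureTheory.measure_singleton _
      have := MeasureTheory.measure_eq_zero_iff_ae_notMem.mp h0
      filter_upwards [this] with x hx
      simpa using hx
    filter_upwards [hae] with x hx hmem
    rw [Set.uIoc_of_le ht.1] at hmem
    exact eqP hd hk1 hkd x ⟨le_of_lt hmem.1, le_trans hmem.2 ht.2⟩ hx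
  rw [hcongr]
  -- step 2 : compute the integral of the continuous version
  have hcont : ∀ c : ℝ, Continuous (fun x => Real.cos (c * Real.arccos x)) :=
    fun c => Real.continuous_cos.comp (continuous_const.mul Real.continuous_arccos)
  have hterm_int : ∀ j : ℕ, IntervalIntegrable
      (fun x => Real.cos (((j:ℝ)+1)*Real.arccos x) * Real.cos (((j:ℝ)+1)*θk))
      MeasureTheory.volume (-1) t :=
    fun j => ((hcont _).mul continuous_const).intervalIntegrable _ _
  have hsum_int : IntervalIntegrable
      (fun x => ∑ j ∈ Finset.range (d-1),
        Real.cos (((j:ℝ)+1)*Real.arccos x) * Real.cos (((j:ℝ)+1)*θk))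
      MeasureTheory.volume (-1) t := by
    apply Continuous.intervalIntegrable
    exact continuous_finset_sum _ (fun j _ => (hcont _).mul continuous_const)
  have hval : (∫ x in (-1:ℝ)..t, (1 + 2*∑ j ∈ Finset.range (d-1),
        Real.cos ((j+1)*Real.arccos x) * Real.cos ((j+1)*θk)) / d)
      = ((t+1) + 2*∑ j ∈ Finset.range (d-1),
          (∫ x in (-1:ℝ)..t, Real.cos (((j:ℝ)+1)*Real.arccos x)) * Real.cos (((j:ℝ)+1)*θk)) / d := by
    rw [intervalIntegral.integral_div]
    congr 1
    rw [intervalIntegral.integral_add intervalIntegrable_const (hsum_int.const_mul 2),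
      intervalIntegral.integral_const_mul,
      intervalIntegral.integral_finset_sum
        (f := fun (j:ℕ) (x:ℝ) => Real.cos (((j:ℝ)+1)*Real.arccos x) * Real.cos (((j:ℝ)+1)*θk))
        (fun j _ => hterm_int j)]
    congr 1
    · simp
    congr 1
    apply Finset.sum_congr rfl
    intro j _
    exact intervalIntegral.integral_mul_const _ _
  rw [hval]
  -- step 3 : bound the sum
  set S := ∑ j ∈ Finset.range (d-1),
      (∫ x in (-1:ℝ)..t, Real.cos (((j:ℝ)+1)*Real.arccos x)) * Real.cos (((j:ℝ)+1)*θk) with hS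
  have key : |(t+1) + 2*S| ≤ 2000 := by
    have habs_t : |t+1| ≤ 2 := by
      rw [abs_le]; constructor <;> [linarith [ht.1]; linarith [ht.2]]
    have hre : S = ∑ m ∈ Finset.Ico 1 d,
        (∫ x in (-1:ℝ)..t, Real.cos ((m:ℝ)*Real.arccos x)) * Real.cos ((m:ℝ)*θk) := by
      rw [hS, Finset.sum_Ico_eq_sum_range]
      apply Finset.sum_congr rfl
      intro j _
      have hc : ((1+j : ℕ) : ℝ) = (j:ℝ)+1 := by push_cast; ring
      simp only [hc]
    rcases Nat.lt_or_ge d 2 with hd2 | hd2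
    · have : d = 1 := by omega
      subst this
      rw [hre]
      simp only [Finset.Ico_self, Finset.sum_empty]
      rw [abs_le]; constructor <;> [linarith [ht.1]; linarith [ht.2]]
    -- d ≥ 2
    have hsplit1 : ∑ m ∈ Finset.Ico 1 d,
          (∫ x in (-1:ℝ)..t, Real.cos ((m:ℝ)*Real.arccos x)) * Real.cos ((m:ℝ)*θk)
        = (∫ x in (-1:ℝ)..t, Real.cos ((1:ℝ)*Real.arccos x)) * Real.cos ((1:ℝ)*θk)
          + ∑ m ∈ Finset.Ico 2 d,
              (∫ x in (-1:ℝ)..t, Real.cos ((m:ℝ)*Real.arccos x)) * Real.cos ((m:ℝ)*θk) := by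
      rw [Finset.sum_eq_sum_Ico_succ_bot (by omega : 1 < d)]
      norm_num
    have hone : (∫ x in (-1:ℝ)..t, Real.cos ((1:ℝ)*Real.arccos x)) * Real.cos ((1:ℝ)*θk)
        = ((t^2-1)/2) * Real.cos θk := by
      simp only [one_mul]
      rw [Gone t ht]
    have hf1 : |((t^2-1)/2) * Real.cos θk| ≤ 1/2 := by
      rw [abs_mul]
      have h1 : |(t^2-1)/2| ≤ 1/2 := by
        rw [abs_le]
        constructor <;> nlinarith [ht.1, ht.2]
      have h2 := Real.abs_cos_le_one θk
      nlinarith [abs_nonneg ((t^2-1)/2), abs_nonneg (Real.cos θk)]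
    -- rewrite Ico 2 d part
    have hA : ∑ m ∈ Finset.Ico 2 d,
          (∫ x in (-1:ℝ)..t, Real.cos ((m:ℝ)*Real.arccos x)) * Real.cos ((m:ℝ)*θk)
        = (∑ m ∈ Finset.Ico 2 d, Aa m t * Real.cos ((m:ℝ)*θk))
          - ∑ m ∈ Finset.Ico 2 d, Aa m (-1) * Real.cos ((m:ℝ)*θk) := by
      rw [← Finset.sum_sub_distrib]
      apply Finset.sum_congr rfl
      intro m hm
      rw [Gval m (Finset.mem_Ico.mp hm).1 t ht]
      ring
    -- telescoping bound helper
    have gtele : ∑ m ∈ Finset.Ico 2 d, (1/((m:ℝ)-1) - 1/((m:ℝ)+1))/2 ≤ 3/4 := by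
      have h := telesum (fun m => 1/((m:ℝ)-1) + 1/(m:ℝ)) hd2
      have heq : ∑ m ∈ Finset.Ico 2 d, (1/((m:ℝ)-1) - 1/((m:ℝ)+1))/2
          = (∑ m ∈ Finset.Ico 2 d,
              ((1/((m:ℝ)-1) + 1/(m:ℝ)) - (1/((↑(m+1):ℝ)-1) + 1/(↑(m+1):ℝ))))/2 := by
        rw [Finset.sum_div]
        apply Finset.sum_congr rfl
        intro m hm
        have hm2 : (2:ℝ) ≤ (m:ℝ) := by exact_mod_cast (Finset.mem_Ico.mp hm).1
        push_cast
        have e1 : ((m:ℝ)+1)-1 = (m:ℝ) := by ring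
        rw [e1]
        ring
      rw [heq, h]
      have hd2' : (2:ℝ) ≤ (d:ℝ) := by exact_mod_cast hd2
      have h1 : (0:ℝ) ≤ ((d:ℝ)-1)⁻¹ := inv_nonneg.mpr (by linarith)
      have h2 : (0:ℝ) ≤ ((d:ℝ))⁻¹ := inv_nonneg.mpr (by linarith)
      norm_num
      linarith
    have habs_diff : ∀ m ∈ Finset.Ico 2 d, |1/((m:ℝ)+1) - 1/((m:ℝ)-1)| = 1/((m:ℝ)-1) - 1/((m:ℝ)+1) := by
      intro m hm
      have hm2 : (2:ℝ) ≤ (m:ℝ) := by exact_mod_cast (Finset.mem_Ico.mp hm).1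
      rw [abs_sub_comm, abs_of_nonneg]
      rw [sub_nonneg, div_le_div_iff₀ (by linarith) (by linarith)]
      linarith
    -- endpoint sum bound
    have hB2 : |∑ m ∈ Finset.Ico 2 d, Aa m (-1) * Real.cos ((m:ℝ)*θk)| ≤ 3/4 := by
      refine le_trans (Finset.abs_sum_le_sum_abs _ _) (le_trans (Finset.sum_le_sum ?_) gtele)
      intro m hm
      have hm2 : (2:ℝ) ≤ (m:ℝ) := by exact_mod_cast (Finset.mem_Ico.mp hm).1
      have hAval : Aa m (-1) = Real.cos (((m:ℝ)-1)*π) * (1/((m:ℝ)+1) - 1/((m:ℝ)-1))/2 := by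
        unfold Aa
        rw [Real.arccos_neg_one,
          show ((m:ℝ)+1)*π = ((m:ℝ)-1)*π + 2*π by ring, Real.cos_add_two_pi]
        field_simp
      rw [hAval, abs_mul, abs_div, abs_mul]
      have h2 : |(2:ℝ)| = 2 := by norm_num
      rw [h2, habs_diff m hm]
      have hcos1 : |Real.cos (((m:ℝ)-1)*π)| ≤ 1 := Real.abs_cos_le_one _
      have hcos2 : |Real.cos ((m:ℝ)*θk)| ≤ 1 := Real.abs_cos_le_one _
      have hnn : (0:ℝ) ≤ 1/((m:ℝ)-1) - 1/((m:ℝ)+1) := by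
        rw [sub_nonneg, div_le_div_iff₀ (by linarith) (by linarith)]; linarith
      have e1 : |Real.cos (((m:ℝ)-1)*π)| * (1/((m:ℝ)-1) - 1/((m:ℝ)+1))
          ≤ (1/((m:ℝ)-1) - 1/((m:ℝ)+1)) := by
        have := mul_le_mul_of_nonneg_right hcos1 hnn
        linarith
      have e2 : |Real.cos (((m:ℝ)-1)*π)| * (1/((m:ℝ)-1) - 1/((m:ℝ)+1)) * |Real.cos ((m:ℝ)*θk)|
          ≤ |Real.cos (((m:ℝ)-1)*π)| * (1/((m:ℝ)-1) - 1/((m:ℝ)+1)) := by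
        have h0 : (0:ℝ) ≤ |Real.cos (((m:ℝ)-1)*π)| * (1/((m:ℝ)-1) - 1/((m:ℝ)+1)) :=
          mul_nonneg (abs_nonneg _) hnn
        have := mul_le_mul_of_nonneg_left hcos2 h0
        simpa using this
      have e3 : |Real.cos (((m:ℝ)-1)*π)| * (1/((m:ℝ)-1) - 1/((m:ℝ)+1)) / 2 * |Real.cos ((m:ℝ)*θk)|
          = (|Real.cos (((m:ℝ)-1)*π)| * (1/((m:ℝ)-1) - 1/((m:ℝ)+1)) * |Real.cos ((m:ℝ)*θk)|)/2 := by
        ring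
      linarith
    -- main sum bound
    have hM : |∑ m ∈ Finset.Ico 2 d, Aa m t * Real.cos ((m:ℝ)*θk)| ≤ 35/4 := by
      have hperm : ∀ m ∈ Finset.Ico 2 d, Aa m t * Real.cos ((m:ℝ)*θk)
          = -Real.sin φ * (Real.sin ((m:ℝ)*(θk+φ))/((m:ℝ)+1))/2
            + Real.sin φ * (Real.sin ((m:ℝ)*(θk-φ))/((m:ℝ)+1))/2
            + (1/((m:ℝ)+1) - 1/((m:ℝ)-1)) *
                (Real.cos ((m:ℝ)*(θk+φ) - φ) + Real.cos ((m:ℝ)*(θk-φ) + φ))/4 := by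
        intro m hm
        have h := perm θk (Real.arccos t) m (Finset.mem_Ico.mp hm).1
        rw [show Aa m t = (Real.cos (((m:ℝ)+1)*Real.arccos t)/((m:ℝ)+1)
            - Real.cos (((m:ℝ)-1)*Real.arccos t)/((m:ℝ)-1))/2 from rfl, hφ]
        exact h
      rw [Finset.sum_congr rfl hperm, Finset.sum_add_distrib, Finset.sum_add_distrib]
      have hX : |∑ m ∈ Finset.Ico 2 d, -Real.sin φ * (Real.sin ((m:ℝ)*(θk+φ))/((m:ℝ)+1))/2| ≤ 4 := by
        have he : ∑ m ∈ Finset.Ico 2 d, -Real.sin φ * (Real.sin ((m:ℝ)*(θk+φ))/((m:ℝ)+1))/2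
            = (-Real.sin φ/2) * ∑ m ∈ Finset.Ico 2 d, Real.sin ((m:ℝ)*(θk+φ))/((m:ℝ)+1) := by
          rw [Finset.mul_sum]
          apply Finset.sum_congr rfl
          intro m _
          ring
        rw [he, abs_mul]
        have h1 : |(-Real.sin φ/2)| ≤ 1/2 := by
          rw [abs_div]
          have := Real.abs_sin_le_one φ
          rw [abs_neg]
          norm_num
          linarith
        have h2 := crux (θk+φ) d
        calc |(-Real.sin φ/2)| * |∑ m ∈ Finset.Ico 2 d, Real.sin ((m:ℝ)*(θk+φ))/((m:ℝ)+1)|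
            ≤ (1/2) * 8 := mul_le_mul h1 h2 (abs_nonneg _) (by norm_num)
          _ = 4 := by norm_num
      have hY : |∑ m ∈ Finset.Ico 2 d, Real.sin φ * (Real.sin ((m:ℝ)*(θk-φ))/((m:ℝ)+1))/2| ≤ 4 := by
        have he : ∑ m ∈ Finset.Ico 2 d, Real.sin φ * (Real.sin ((m:ℝ)*(θk-φ))/((m:ℝ)+1))/2
            = (Real.sin φ/2) * ∑ m ∈ Finset.Ico 2 d, Real.sin ((m:ℝ)*(θk-φ))/((m:ℝ)+1) := by
          rw [Finset.mul_sum]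
          apply Finset.sum_congr rfl
          intro m _
          ring
        rw [he, abs_mul]
        have h1 : |(Real.sin φ/2)| ≤ 1/2 := by
          rw [abs_div]
          have := Real.abs_sin_le_one φ
          norm_num
          linarith
        have h2 := crux (θk-φ) d
        calc |(Real.sin φ/2)| * |∑ m ∈ Finset.Ico 2 d, Real.sin ((m:ℝ)*(θk-φ))/((m:ℝ)+1)|
            ≤ (1/2) * 8 := mul_le_mul h1 h2 (abs_nonneg _) (by norm_num)
          _ = 4 := by norm_num
      have hR : |∑ m ∈ Finset.Ico 2 d, (1/((m:ℝ)+1) - 1/((m:ℝ)-1)) *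
            (Real.cos ((m:ℝ)*(θk+φ) - φ) + Real.cos ((m:ℝ)*(θk-φ) + φ))/4| ≤ 3/4 := by
        refine le_trans (Finset.abs_sum_le_sum_abs _ _) (le_trans (Finset.sum_le_sum ?_) gtele)
        intro m hm
        have hm2 : (2:ℝ) ≤ (m:ℝ) := by exact_mod_cast (Finset.mem_Ico.mp hm).1
        rw [abs_div, abs_mul, habs_diff m hm]
        have h4 : |(4:ℝ)| = 4 := by norm_num
        rw [h4]
        have hcos : |Real.cos ((m:ℝ)*(θk+φ) - φ) + Real.cos ((m:ℝ)*(θk-φ) + φ)| ≤ 2 := by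
          refine le_trans (abs_add_le _ _) ?_
          have := Real.abs_cos_le_one ((m:ℝ)*(θk+φ) - φ)
          have := Real.abs_cos_le_one ((m:ℝ)*(θk-φ) + φ)
          linarith
        have hnn : (0:ℝ) ≤ 1/((m:ℝ)-1) - 1/((m:ℝ)+1) := by
          rw [sub_nonneg, div_le_div_iff₀ (by linarith) (by linarith)]; linarith
        have e1 : (1/((m:ℝ)-1) - 1/((m:ℝ)+1)) * |Real.cos ((m:ℝ)*(θk+φ) - φ) + Real.cos ((m:ℝ)*(θk-φ) + φ)|
            ≤ (1/((m:ℝ)-1) - 1/((m:ℝ)+1)) * 2 := mul_le_mul_of_nonneg_left hcos hnn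
        linarith
      calc |∑ m ∈ Finset.Ico 2 d, -Real.sin φ * (Real.sin ((m:ℝ)*(θk+φ))/((m:ℝ)+1))/2
            + ∑ m ∈ Finset.Ico 2 d, Real.sin φ * (Real.sin ((m:ℝ)*(θk-φ))/((m:ℝ)+1))/2
            + ∑ m ∈ Finset.Ico 2 d, (1/((m:ℝ)+1) - 1/((m:ℝ)-1)) *
                (Real.cos ((m:ℝ)*(θk+φ) - φ) + Real.cos ((m:ℝ)*(θk-φ) + φ))/4|
          ≤ 4 + 4 + 3/4 := by
            refine le_trans (abs_add_le _ _) ?_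
            refine le_trans (add_le_add (abs_add_le _ _) le_rfl) ?_
            linarith
        _ = 35/4 := by norm_num
    -- combine
    rw [hre, hsplit1, hone, hA]
    have h1 := abs_le.mp hf1
    have h2 := abs_le.mp hM
    have h3 := abs_le.mp hB2
    have h4 := abs_le.mp habs_t
    rw [abs_le]
    constructor <;> linarith
  rw [abs_div, abs_of_pos hd0]
  exact (div_le_div_iff_of_pos_right hd0).mpr key
end
end

section
/- Let u : [0,ℓ] → ℝⁿ satisfy the integral inequality ‖u(t)‖ ≤ a + bt + λ∫₀^t (t−s)‖u(s)‖ ds for constants a, b ≥ 0 and λ > 0. Then ‖u(t)‖ ≤ a·cosh(√λ t) + (b/√λ)·sinh(√λ t) for all t ∈ [0, ℓ]. -/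
/-- Grönwall-type comparison for the Jacobi equation: if a continuous curve `u` in `ℝⁿ`
satisfies `‖u(t)‖ ≤ a + bt + λ∫₀ᵗ (t−s)‖u(s)‖ ds`, then
`‖u(t)‖ ≤ a cosh(√λ t) + (b/√λ) sinh(√λ t)`. -/
theorem gronwall_jacobi {n : ℕ} (ℓ a b lam : ℝ) (hℓ : 0 ≤ ℓ)
    (ha : 0 ≤ a) (hb : 0 ≤ b) (hlam : 0 < lam)
    (u : ℝ → EuclideanSpace ℝ (Fin n)) (hu : ContinuousOn u (Set.Icc (0:ℝ) ℓ))
    (hineq : ∀ t ∈ Set.Icc (0:ℝ) ℓ,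
      ‖u t‖ ≤ a + b * t + lam * ∫ s in (0:ℝ)..t, (t - s) * ‖u s‖) :
    ∀ t ∈ Set.Icc (0:ℝ) ℓ,
      ‖u t‖ ≤ a * Real.cosh (Real.sqrt lam * t)
        + b / Real.sqrt lam * Real.sinh (Real.sqrt lam * t) := by
  set c := Real.sqrt lam with hcdef
  have hc0 : 0 < c := Real.sqrt_pos.mpr hlam
  have hcc : c * c = lam := Real.mul_self_sqrt hlam.le
  -- continuous nonneg extension of ‖u ·‖ to all of ℝ
  set g : ℝ → ℝ := fun t => ‖(Set.Icc (0:ℝ) ℓ).restrict u (Set.projIcc 0 ℓ hℓ t)‖ with hgdef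
  have hgc : Continuous g := (hu.restrict.comp continuous_projIcc).norm
  have hg0 : ∀ t, 0 ≤ g t := fun t => norm_nonneg _
  have hge : ∀ t ∈ Set.Icc (0:ℝ) ℓ, g t = ‖u t‖ := by
    intro t ht
    simp [hgdef, Set.projIcc_of_mem hℓ ht]; rfl
  set F : ℝ → ℝ := fun t => ∫ s in (0:ℝ)..t, g s with hFdef
  set G : ℝ → ℝ := fun t => ∫ s in (0:ℝ)..t, s * g s with hGdef
  have hF : ∀ t, HasDerivAt F (g t) t := fun t =>
    (hgc.integral_hasStrictDerivAt 0 t).hasDerivAt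
  have hG : ∀ t, HasDerivAt G (t * g t) t := fun t =>
    ((continuous_id.mul hgc).integral_hasStrictDerivAt 0 t).hasDerivAt
  set φ : ℝ → ℝ := fun t => a + b * t + lam * (t * F t - G t) with hφdef
  set P : ℝ → ℝ := fun t => b + lam * F t with hPdef
  have hφ : ∀ t, HasDerivAt φ (P t) t := by
    intro t
    have h1 : HasDerivAt (fun t => t * F t - G t) (F t) t := by
      have := ((hasDerivAt_id t).mul (hF t)).sub (hG t)
      exact this.congr_deriv (by show 1 * F t + t * g t - t * g t = F t; ring)
    have h2 := (((hasDerivAt_id t).const_mul b).const_add a).add (h1.const_mul lam)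
    exact h2.congr_deriv (by show b * 1 + lam * F t = b + lam * F t; ring)
  have hP : ∀ t, HasDerivAt P (lam * g t) t := fun t =>
    ((hF t).const_mul lam).const_add b
  set z : ℝ → ℝ := fun t => c * φ t + P t with hzdef
  have hz : ∀ t, HasDerivAt z (c * P t + lam * g t) t := fun t =>
    ((hφ t).const_mul c).add (hP t)
  -- the integral inequality in terms of φ
  have hint : ∀ t ∈ Set.Icc (0:ℝ) ℓ,
      (∫ s in (0:ℝ)..t, (t - s) * ‖u s‖) = t * F t - G t := by
    intro t ht
    have h1 : (∫ s in (0:ℝ)..t, (t - s) * ‖u s‖) = ∫ s in (0:ℝ)..t, (t - s) * g s := by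
      apply intervalIntegral.integral_congr
      intro s hs
      rw [Set.uIcc_of_le ht.1] at hs
      show (t - s) * ‖u s‖ = (t - s) * g s
      rw [hge s ⟨hs.1, hs.2.trans ht.2⟩]
    have h2 : ∀ s : ℝ, (t - s) * g s = t * g s - s * g s := fun s => by ring
    rw [h1]
    simp only [h2]
    have hi1 : IntervalIntegrable (fun s => t * g s) MeasureTheory.volume 0 t :=
      (continuous_const.mul hgc).intervalIntegrable 0 t
    have hi2 : IntervalIntegrable (fun s => s * g s) MeasureTheory.volume 0 t :=
      (continuous_id.mul hgc).intervalIntegrable 0 t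
    rw [intervalIntegral.integral_sub hi1 hi2, intervalIntegral.integral_const_mul]
  have hgφ : ∀ t ∈ Set.Icc (0:ℝ) ℓ, g t ≤ φ t := by
    intro t ht
    rw [hge t ht, hφdef]
    have := hineq t ht
    rwa [hint t ht] at this
  have hF0 : F 0 = 0 := intervalIntegral.integral_same
  have hG0 : G 0 = 0 := intervalIntegral.integral_same
  have hφ0 : φ 0 = a := by simp [hφdef, hF0, hG0]
  have hP0 : P 0 = b := by simp [hPdef, hF0]
  -- first Grönwall step: z t ≤ (c*a + b) * exp (c * t)
  have stepB : ∀ t ∈ Set.Icc (0:ℝ) ℓ, z t ≤ (c * a + b) * Real.exp (c * t) := by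
    have := le_gronwallBound_of_liminf_deriv_right_le (f := z)
      (f' := fun t => c * P t + lam * g t) (δ := c * a + b) (K := c) (ε := 0)
      (a := 0) (b := ℓ)
      (fun t _ => (hz t).continuousAt.continuousWithinAt)
      (fun x _ r hr => ((hz x).hasDerivWithinAt).liminf_right_slope_le hr)
      (by show c * φ 0 + P 0 ≤ c * a + b; rw [hφ0, hP0])
      (by
        intro x hx
        have hgφx := hgφ x ⟨hx.1, hx.2.le⟩
        have hlg : lam * g x ≤ lam * φ x := mul_le_mul_of_nonneg_left hgφx hlam.le
        show c * P x + lam * g x ≤ c * (c * φ x + P x) + 0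
        have e : c * (c * φ x + P x) + 0 = c * P x + lam * φ x := by rw [← hcc]; ring
        rw [e]
        linarith)
    intro t ht
    have h := this t ht
    rwa [sub_zero, gronwallBound_ε0] at h
  -- comparison function
  set D : ℝ → ℝ := fun t => a * c * Real.sinh (c * t) + b * Real.cosh (c * t) with hDdef
  set A : ℝ → ℝ := fun t => a * Real.cosh (c * t) + b / c * Real.sinh (c * t) with hAdef
  have hA : ∀ t, HasDerivAt A (D t) t := by
    intro t
    have hct : HasDerivAt (fun t : ℝ => c * t) c t := by
      simpa using (hasDerivAt_id t).const_mul c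
    have h1 : HasDerivAt (fun t => Real.cosh (c * t)) (Real.sinh (c * t) * c) t :=
      (Real.hasDerivAt_cosh (c * t)).comp t hct
    have h2 : HasDerivAt (fun t => Real.sinh (c * t)) (Real.cosh (c * t) * c) t :=
      (Real.hasDerivAt_sinh (c * t)).comp t hct
    have := (h1.const_mul a).add (h2.const_mul (b / c))
    simp only [hDdef]
    exact this.congr_deriv (by
      rw [show b / c * (Real.cosh (c * t) * c) = b * Real.cosh (c * t) by rw [mul_comm (Real.cosh (c * t)) c, ← mul_assoc, div_mul_cancel₀ b hc0.ne']]
      ring)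
  have key : ∀ x : ℝ, D x + c * A x = (c * a + b) * Real.exp (c * x) := by
    intro x
    simp only [hDdef, hAdef]
    field_simp
    rw [← Real.sinh_add_cosh (c * x)]
    ring
  set w : ℝ → ℝ := fun t => φ t - A t with hwdef
  have hw : ∀ t, HasDerivAt w (P t - D t) t := fun t => (hφ t).sub (hA t)
  have stepC : ∀ t ∈ Set.Icc (0:ℝ) ℓ, w t ≤ 0 := by
    have := le_gronwallBound_of_liminf_deriv_right_le (f := w)
      (f' := fun t => P t - D t) (δ := 0) (K := -c) (ε := 0) (a := 0) (b := ℓ)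
      (fun t _ => (hw t).continuousAt.continuousWithinAt)
      (fun x _ r hr => ((hw x).hasDerivWithinAt).liminf_right_slope_le hr)
      (by show φ 0 - A 0 ≤ 0; simp [hφ0, hAdef])
      (by
        intro x hx
        have hzx : c * φ x + P x ≤ (c * a + b) * Real.exp (c * x) := stepB x ⟨hx.1, hx.2.le⟩
        have hk := key x
        show P x - D x ≤ -c * (φ x - A x) + 0
        linarith)
    intro t ht
    have h := this t ht
    rwa [gronwallBound_ε0_δ0] at h
  intro t ht
  have h1 : ‖u t‖ ≤ φ t := by rw [← hge t ht]; exact hgφ t ht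
  have h2 := stepC t ht
  have h2' : φ t - A t ≤ 0 := h2
  have : φ t ≤ A t := by linarith
  calc ‖u t‖ ≤ φ t := h1
    _ ≤ A t := this
    _ = _ := by rw [hAdef]
end

section
/- Let γ be a geodesic in the Hessian manifold of the logarithmic barrier on {Ax > b} (so γ'' = (A_γᵀA_γ)⁻¹A_γᵀ s_{γ'}², where s_{γ'} = S_γ⁻¹Aγ' and the square is entrywise). Let v₄ = ‖s_{γ'(0)}‖₄. Then for all 0 ≤ t ≤ 1/(10 v₄): (1) ‖s_{γ'(t)}‖₄ ≤ 1.25 v₄, and (2) ‖γ''(t)‖²_{γ(t)} ≤ 3 v₄⁴, where ‖w‖²_x = wᵀA_xᵀA_x w. -/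
/-- The `ℓ_p` norm of a vector (here used with `p = 4`). -/
noncomputable def lpNorm {m : ℕ} (v : Fin m → ℝ) (p : ℝ) : ℝ :=
  (∑ i, |v i| ^ p) ^ (1/p)

open Matrix Set Filter

lemma Ascaled_mulVec {m n : ℕ} (A : Matrix (Fin m) (Fin n) ℝ) (b : Fin m → ℝ)
    (x : Fin n → ℝ) (v : Fin n → ℝ) (i : Fin m) :
    (Ascaled A b x).mulVec v i = A.mulVec v i / slack A b x i := by
  simp [Ascaled, Matrix.mulVec, dotProduct, div_mul_eq_mul_div, Finset.sum_div]

lemma dot_transpose {m n : ℕ} (M : Matrix (Fin m) (Fin n) ℝ) (v : Fin n → ℝ) (u : Fin m → ℝ) :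
    dotProduct v (M.transpose.mulVec u) = dotProduct (M.mulVec v) u := by
  rw [Matrix.mulVec_transpose, dotProduct_comm v, ← Matrix.dotProduct_mulVec,
    dotProduct_comm]

lemma mulVec_eq_zero_of_rank {m n : ℕ} (A : Matrix (Fin m) (Fin n) ℝ) (h : A.rank = n)
    {x : Fin n → ℝ} (hx : A.mulVec x = 0) : x = 0 := by
  have h1 := LinearMap.finrank_range_add_finrank_ker A.mulVecLin
  rw [Module.finrank_fintype_fun_eq_card, Fintype.card_fin] at h1
  have h2 : Module.finrank ℝ (LinearMap.range A.mulVecLin) = n := h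
  have hker : LinearMap.ker A.mulVecLin = ⊥ := by
    rw [← Submodule.finrank_eq_zero (R := ℝ)]
    omega
  have hmem : x ∈ LinearMap.ker A.mulVecLin := by
    simpa [Matrix.mulVecLin_apply] using hx
  rw [hker] at hmem
  simpa using hmem

lemma gmat_posDef {m n : ℕ} (A : Matrix (Fin m) (Fin n) ℝ) (b : Fin m → ℝ)
    (x : Fin n → ℝ) (hrank : A.rank = n) (hs : ∀ i, 0 < slack A b x i) :
    (gmat A b x).PosDef := by
  rw [Matrix.posDef_iff_dotProduct_mulVec]
  constructor
  · show (gmat A b x).conjTranspose = gmat A b x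
    ext i j
    simp [gmat, Matrix.conjTranspose_apply, Matrix.mul_apply, Matrix.transpose_apply, mul_comm]
  · intro z hz
    have hZ : dotProduct (star z) ((gmat A b x).mulVec z)
        = ∑ i, ((Ascaled A b x).mulVec z i)^2 := by
      rw [star_trivial, gmat, ← Matrix.mulVec_mulVec, dot_transpose]
      simp [dotProduct, sq]
    rw [hZ]
    have hMz : (Ascaled A b x).mulVec z ≠ 0 := by
      intro h0
      apply hz
      apply mulVec_eq_zero_of_rank A hrank
      funext i
      have := congrFun h0 i
      rw [Ascaled_mulVec] at this
      have hsi := (hs i).ne'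
      field_simp at this
      simpa using this
    have : ∃ i, (Ascaled A b x).mulVec z i ≠ 0 := by
      by_contra hcon
      push_neg at hcon
      exact hMz (funext hcon)
    obtain ⟨i, hi⟩ := this
    have : (0:ℝ) < ((Ascaled A b x).mulVec z i)^2 := by positivity
    exact lt_of_lt_of_le this (Finset.single_le_sum (f := fun i => ((Ascaled A b x).mulVec z i)^2)
      (fun j _ => sq_nonneg _) (Finset.mem_univ i))

set_option maxHeartbeats 2000000

/-- Stability of the `ℓ₄` norm along geodesics of the log-barrier metric: with
`v₄ = ‖s_{γ'(0)}‖₄`, for `0 ≤ t ≤ 1/(10v₄)` one has `‖s_{γ'(t)}‖₄ ≤ 1.25 v₄` and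
`‖γ''(t)‖²_{γ(t)} ≤ 3v₄⁴`. -/
theorem geodesic_L4_stability {m n : ℕ} (A : Matrix (Fin m) (Fin n) ℝ)
    (b : Fin m → ℝ) (hrank : A.rank = n)
    (γ γ' γ'' : ℝ → Fin n → ℝ) (v4 : ℝ)
    (hv4def : v4 = lpNorm ((Ascaled A b (γ 0)).mulVec (γ' 0)) 4) (hv4 : 0 < v4)
    (hin : ∀ t ∈ Set.Icc (0:ℝ) (1/(10*v4)), ∀ i, b i < A.mulVec (γ t) i)
    (hd1 : ∀ t ∈ Set.Icc (0:ℝ) (1/(10*v4)), HasDerivAt γ (γ' t) t)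
    (hd2 : ∀ t ∈ Set.Icc (0:ℝ) (1/(10*v4)), HasDerivAt γ' (γ'' t) t)
    (hgeo : ∀ t ∈ Set.Icc (0:ℝ) (1/(10*v4)),
      γ'' t = ((gmat A b (γ t))⁻¹).mulVec ((Ascaled A b (γ t)).transpose.mulVec
        (fun i => ((Ascaled A b (γ t)).mulVec (γ' t) i) ^ 2))) :
    ∀ t ∈ Set.Icc (0:ℝ) (1/(10*v4)),
      lpNorm ((Ascaled A b (γ t)).mulVec (γ' t)) 4 ≤ 1.25 * v4 ∧
      dotProduct (γ'' t) ((gmat A b (γ t)).mulVec (γ'' t)) ≤ 3 * v4 ^ 4 := by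
  set T : ℝ := 1/(10*v4) with hT
  have hT0 : 0 < T := by positivity
  have hs : ∀ t ∈ Set.Icc (0:ℝ) T, ∀ i, 0 < slack A b (γ t) i :=
    fun t ht i => sub_pos.mpr (hin t ht i)
  set w : ℝ → Fin m → ℝ := fun t => (Ascaled A b (γ t)).mulVec (γ' t) with hw
  set y : ℝ → Fin m → ℝ := fun t => (Ascaled A b (γ t)).mulVec (γ'' t) with hy
  set φ : ℝ → ℝ := fun t => ∑ i, (w t i)^4 with hφ
  have hφnn : ∀ t, 0 ≤ φ t := fun t => Finset.sum_nonneg fun i _ => by positivity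
  have hwle : ∀ t, ∀ i, (w t i)^4 ≤ φ t := fun t i =>
    Finset.single_le_sum (f := fun i => (w t i)^4) (fun j _ => by positivity) (Finset.mem_univ i)
  -- the geodesic equation, in solved form
  have hgid : ∀ t ∈ Set.Icc (0:ℝ) T, (gmat A b (γ t)).mulVec (γ'' t)
      = (Ascaled A b (γ t)).transpose.mulVec (fun i => (w t i)^2) := by
    intro t ht
    have hpd := gmat_posDef A b (γ t) hrank (hs t ht)
    have hdet : IsUnit (gmat A b (γ t)).det := isUnit_iff_ne_zero.mpr hpd.det_pos.ne'
    rw [hgeo t ht, Matrix.mulVec_mulVec, Matrix.mul_nonsing_inv _ hdet, Matrix.one_mulVec]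
  -- the metric norm of γ'' equals ∑ y², which also equals ∑ y·w²
  have hSid : ∀ t ∈ Set.Icc (0:ℝ) T,
      dotProduct (γ'' t) ((gmat A b (γ t)).mulVec (γ'' t)) = ∑ i, (y t i)^2 := by
    intro t ht
    rw [gmat, ← Matrix.mulVec_mulVec, dot_transpose]
    simp [hy, dotProduct, sq]
  have hSw : ∀ t ∈ Set.Icc (0:ℝ) T, ∑ i, (y t i)^2 = ∑ i, y t i * (w t i)^2 := by
    intro t ht
    rw [← hSid t ht, hgid t ht, dot_transpose]
    simp [hy, dotProduct]
  have hSle : ∀ t ∈ Set.Icc (0:ℝ) T, ∑ i, (y t i)^2 ≤ φ t := by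
    intro t ht
    have hcs := Finset.sum_mul_sq_le_sq_mul_sq Finset.univ (fun i => y t i) (fun i => (w t i)^2)
    have h1 : (∑ i, y t i * (w t i)^2)^2 ≤ (∑ i, (y t i)^2) * φ t := by
      calc (∑ i, y t i * (w t i)^2)^2 ≤ (∑ i, (y t i)^2) * ∑ i, ((w t i)^2)^2 := hcs
        _ = (∑ i, (y t i)^2) * φ t := by
            rw [hφ]
            congr 1
            exact Finset.sum_congr rfl fun i _ => by ring
    rw [← hSw t ht] at h1
    have hS0 : 0 ≤ ∑ i, (y t i)^2 := Finset.sum_nonneg fun i _ => sq_nonneg _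
    rcases hS0.eq_or_lt with h | h
    · rw [← h]; exact hφnn t
    · nlinarith
  -- derivative of φ
  have hφ' : ∀ t ∈ Set.Icc (0:ℝ) T,
      HasDerivAt φ (∑ i, 4 * (w t i)^3 * (y t i - (w t i)^2)) t := by
    intro t ht
    have hda : ∀ i, HasDerivAt (fun u => w u i) (y t i - (w t i)^2) t := by
      intro i
      have hN : HasDerivAt (fun u => A.mulVec (γ' u) i) (A.mulVec (γ'' t) i) t := by
        simp only [Matrix.mulVec, dotProduct]
        exact HasDerivAt.fun_sum fun j _ => ((hasDerivAt_pi.mp (hd2 t ht)) j).const_mul (A i j)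
      have hD : HasDerivAt (fun u => slack A b (γ u) i) (A.mulVec (γ' t) i) t := by
        have h1 : HasDerivAt (fun u => A.mulVec (γ u) i) (A.mulVec (γ' t) i) t := by
          simp only [Matrix.mulVec, dotProduct]
          exact HasDerivAt.fun_sum fun j _ => ((hasDerivAt_pi.mp (hd1 t ht)) j).const_mul (A i j)
        simpa [slack] using h1.sub_const (b i)
      have hne : slack A b (γ t) i ≠ 0 := (hs t ht i).ne'
      have hdiv := hN.fun_div hD hne
      have heq : (fun u => w u i) = fun u => A.mulVec (γ' u) i / slack A b (γ u) i := by
        funext u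
        simp only [hw]
        exact Ascaled_mulVec A b (γ u) (γ' u) i
      rw [heq]
      refine hdiv.congr_deriv ?_
      rw [hy, hw]
      simp only
      rw [Ascaled_mulVec, Ascaled_mulVec]
      field_simp
    have hsum : HasDerivAt (fun u => ∑ i, (w u i)^4)
        (∑ i, ((4:ℕ) * (w t i)^(4-1) * (y t i - (w t i)^2))) t :=
      HasDerivAt.fun_sum fun i _ => ((hda i).pow 4)
    have : φ = fun u => ∑ i, (w u i)^4 := rfl
    rw [this]
    convert hsum using 1
    norm_num
  -- lpNorm in terms of φ
  have hlpAll : ∀ u : ℝ, lpNorm (w u) 4 = (φ u) ^ (1/4:ℝ) := by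
    intro u
    rw [lpNorm]
    congr 1
    simp only [hφ]
    refine Finset.sum_congr rfl fun i _ => ?_
    rw [show (4:ℝ) = ((4:ℕ):ℝ) by norm_num, Real.rpow_natCast, pow_abs,
      abs_of_nonneg (by positivity : (0:ℝ) ≤ w u i ^ 4)]
  have hφ0 : φ 0 = v4 ^ 4 := by
    rw [hv4def, hlpAll 0, ← Real.rpow_natCast ((φ 0) ^ (1/4:ℝ)) 4,
      ← Real.rpow_mul (hφnn 0)]
    norm_num
  -- comparison with the explicit solution, with margin δ
  have hbound : ∀ δ ∈ Set.Ioc (0:ℝ) 1, ∀ t ∈ Set.Icc (0:ℝ) T, φ t ≤ (5*v4/(4-δ))^4 := by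
    intro δ hδ
    obtain ⟨hδ0, hδ1⟩ := hδ
    set c : ℝ := 2*(1+δ)*v4 with hc
    have hc0 : 0 < c := by
      have h1 : (0:ℝ) < 1 + δ := by linarith
      rw [hc]; positivity
    have hcT : c * T = (1+δ)/5 := by
      rw [hT, hc]; field_simp; ring
    have hden : ∀ u ∈ Set.Icc (0:ℝ) T, (4-δ)/5 ≤ 1 - c*u := by
      intro u hu
      have h1 : c*u ≤ c*T := mul_le_mul_of_nonneg_left hu.2 hc0.le
      rw [hcT] at h1
      linarith
    have hden0 : ∀ u ∈ Set.Icc (0:ℝ) T, 0 < 1 - c*u := by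
      intro u hu
      have := hden u hu
      linarith
    set B : ℝ → ℝ := fun u => (v4 * (1 - c*u)⁻¹)^4 with hB
    have hBd : ∀ u ∈ Set.Icc (0:ℝ) T, HasDerivAt B (8*(1+δ)*(v4*(1-c*u)⁻¹)^5) u := by
      intro u hu
      have h1 : HasDerivAt (fun u : ℝ => 1 - c*u) (-(c*1)) u := by
        exact ((hasDerivAt_id u).const_mul c).const_sub 1
      have h2 := (h1.inv (hden0 u hu).ne').const_mul v4
      have h3 := h2.pow 4
      have hBe : B = fun u : ℝ => (v4 * (1 - c*u)⁻¹)^4 := rfl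
      rw [hBe]
      refine h3.congr_deriv ?_
      have hne := (hden0 u hu).ne'
      simp only [Pi.inv_apply]
      generalize 1 - c*u = d at hne ⊢
      rw [hc]
      field_simp
      have hd3 : d^3 * d⁻¹^3 = 1 := by rw [← mul_pow, mul_inv_cancel₀ hne, one_pow]
      linear_combination (v4^3*8) * hd3
    have hcomp : ∀ x ∈ Set.Icc (0:ℝ) T, φ x ≤ B x := by
      intro x hx
      refine image_le_of_deriv_right_lt_deriv_boundary'
        (f' := fun u => ∑ i, 4 * (w u i)^3 * (y u i - (w u i)^2))
        (B := B) (B' := fun u => 8*(1+δ)*(v4*(1-c*u)⁻¹)^5)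
        (fun u hu => (hφ' u hu).continuousAt.continuousWithinAt)
        (fun u hu => (hφ' u (Ico_subset_Icc_self hu)).hasDerivWithinAt)
        ?_ (fun u hu => (hBd u hu).continuousAt.continuousWithinAt)
        (fun u hu => (hBd u (Ico_subset_Icc_self hu)).hasDerivWithinAt) ?_ hx
      · rw [hφ0, hB]
        norm_num
      · -- contact point bound
        intro x hx hcontact
        have hxI : x ∈ Set.Icc (0:ℝ) T := Ico_subset_Icc_self hx
        set β : ℝ := v4 * (1 - c*x)⁻¹ with hβdef
        have hβ : 0 < β := by
          have := hden0 x hxI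
          rw [hβdef]; positivity
        have hφx : φ x = β^4 := hcontact
        have hwb : ∀ i, |w x i| ≤ β := by
          intro i
          have h1 : |w x i|^4 ≤ β^4 := by
            calc |w x i|^4 = (w x i)^4 := by
                  rw [pow_abs, abs_of_nonneg (by positivity : (0:ℝ) ≤ w x i ^ 4)]
              _ ≤ φ x := hwle x i
              _ = β^4 := hφx
          exact le_of_pow_le_pow_left₀ (by norm_num) hβ.le h1
        have hw6 : ∑ i, ((w x i)^3)^2 ≤ β^6 := by
          have h1 : ∀ i : Fin m, ((w x i)^3)^2 ≤ (w x i)^4 * β^2 := by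
            intro i
            have h2 := hwb i
            have h3 : (w x i)^2 ≤ β^2 := by
              nlinarith [abs_nonneg (w x i), sq_abs (w x i)]
            calc ((w x i)^3)^2 = (w x i)^4 * (w x i)^2 := by ring
              _ ≤ (w x i)^4 * β^2 := by
                  exact mul_le_mul_of_nonneg_left h3 (by positivity)
          calc ∑ i, ((w x i)^3)^2 ≤ ∑ i, (w x i)^4 * β^2 :=
                Finset.sum_le_sum (fun i _ => h1 i)
            _ = φ x * β^2 := by rw [hφ, ← Finset.sum_mul]
            _ = β^6 := by rw [hφx]; ring
        have hS : ∑ i, (y x i)^2 ≤ β^4 := by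
          rw [← hφx]
          exact hSle x hxI
        have h3y : ∑ i, (w x i)^3 * y x i ≤ β^5 := by
          have hcs := Finset.sum_mul_sq_le_sq_mul_sq Finset.univ
            (fun i => (w x i)^3) (fun i => y x i)
          have hS0 : (0:ℝ) ≤ ∑ i, (y x i)^2 := Finset.sum_nonneg fun i _ => sq_nonneg _
          have hw60 : (0:ℝ) ≤ ∑ i, ((w x i)^3)^2 := Finset.sum_nonneg fun i _ => sq_nonneg _
          have h1 : (∑ i, (w x i)^3 * y x i)^2 ≤ β^6 * β^4 := by
            calc (∑ i, (w x i)^3 * y x i)^2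
                ≤ (∑ i, ((w x i)^3)^2) * ∑ i, (y x i)^2 := hcs
              _ ≤ β^6 * β^4 := mul_le_mul hw6 hS hS0 (by positivity)
          nlinarith [pow_pos hβ 5]
        have h5 : ∑ i, -((w x i)^5) ≤ β^5 := by
          have h1 : ∀ i : Fin m, -((w x i)^5) ≤ (w x i)^4 * β := by
            intro i
            have h2 := hwb i
            calc -((w x i)^5) ≤ |(w x i)^5| := neg_le_abs _
              _ = |w x i|^4 * |w x i| := by rw [abs_pow]; ring
              _ = (w x i)^4 * |w x i| := by
                  rw [pow_abs, abs_of_nonneg (by positivity : (0:ℝ) ≤ w x i ^ 4)]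
              _ ≤ (w x i)^4 * β := mul_le_mul_of_nonneg_left h2 (by positivity)
          calc ∑ i, -((w x i)^5) ≤ ∑ i, (w x i)^4 * β :=
                Finset.sum_le_sum (fun i _ => h1 i)
            _ = φ x * β := by rw [hφ, ← Finset.sum_mul]
            _ = β^5 := by rw [hφx]; ring
        calc ∑ i, 4*(w x i)^3*(y x i - (w x i)^2)
            = 4*(∑ i, (w x i)^3 * y x i) + 4*(∑ i, -((w x i)^5)) := by
              rw [Finset.mul_sum, Finset.mul_sum, ← Finset.sum_add_distrib]
              exact Finset.sum_congr rfl fun i _ => by ring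
          _ ≤ 4*β^5 + 4*β^5 := by linarith
          _ < 8*(1+δ)*β^5 := by nlinarith [pow_pos hβ 5]
    intro t ht
    calc φ t ≤ B t := hcomp t ht
      _ ≤ (5*v4/(4-δ))^4 := by
          rw [hB]
          have h1 := hden t ht
          have h2 := hden0 t ht
          have hd5 : (0:ℝ) < 4-δ := by linarith
          have h3 : v4 * (1-c*t)⁻¹ ≤ 5*v4/(4-δ) := by
            rw [← div_eq_mul_inv, div_le_div_iff₀ h2 hd5]
            nlinarith [mul_le_mul_of_nonneg_left h1 hv4.le]
          exact pow_le_pow_left₀ (by positivity) h3 4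
  -- pass to the limit δ → 0⁺
  have hmain : ∀ t ∈ Set.Icc (0:ℝ) T, φ t ≤ (5*v4/4)^4 := by
    intro t ht
    have hev : ∀ᶠ δ in nhdsWithin (0:ℝ) (Set.Ioi 0), φ t ≤ (5*v4/(4-δ))^4 := by
      filter_upwards [Ioc_mem_nhdsGT_of_mem
        (⟨le_refl (0:ℝ), zero_lt_one⟩ : (0:ℝ) ∈ Set.Ico (0:ℝ) 1)] with δ hδ
      exact hbound δ hδ t ht
    have hcont : ContinuousAt (fun δ : ℝ => (5*v4/(4-δ))^4) 0 := by
      apply ContinuousAt.pow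
      exact ContinuousAt.div continuousAt_const
        (continuousAt_const.sub continuousAt_id) (by norm_num)
    have hlim : Tendsto (fun δ : ℝ => (5*v4/(4-δ))^4)
        (nhdsWithin (0:ℝ) (Set.Ioi 0)) (nhds ((5*v4/4)^4)) := by
      have h1 := hcont.tendsto
      have h2 : (5*v4/(4-(0:ℝ)))^4 = (5*v4/4)^4 := by norm_num
      rw [h2] at h1
      exact h1.mono_left nhdsWithin_le_nhds
    exact ge_of_tendsto hlim hev
  -- conclusions
  intro t ht
  have hφt := hmain t ht
  constructor
  · rw [hlpAll t]
    have h1 : (φ t)^(1/4:ℝ) ≤ ((5*v4/4)^4)^(1/4:ℝ) :=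
      Real.rpow_le_rpow (hφnn t) hφt (by norm_num)
    have h2 : ((5*v4/4)^4)^(1/4:ℝ) = 5*v4/4 := by
      rw [← Real.rpow_natCast (5*v4/4) 4, ← Real.rpow_mul (by positivity : (0:ℝ) ≤ 5*v4/4)]
      norm_num
    calc (φ t)^(1/4:ℝ) ≤ ((5*v4/4)^4)^(1/4:ℝ) := h1
      _ = 5*v4/4 := h2
      _ = 1.25 * v4 := by norm_num; ring
  · rw [hSid t ht]
    have h1 := hSle t ht
    nlinarith [pow_pos hv4 4]
end
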